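/- arXiv:2011.12324 — 4 statements merged into one kernel-verified Lean document; each statement's English description precedes it below -/
import Mathlib

section
/- Let R be a commutative Noetherian ring and let (F_•, d_•): 0 → F_3 → F_2 → F_1 → F_0 = R be a length-3 free resolution of a cyclic R-module R/I, equipped with a unitary R-bilinear multiplication with F_i · F_j ⊆ F_{i+j} satisfying the Leibniz rule d_{i+j}(f_i f_j) = d_i(f_i) f_j + (−1)^i f_i d_j(f_j), graded commutativity f_i f_j = (−1)^{ij} f_j f_i, and f_i² = 0 for i odd. Then this multiplication is associative. -/
/-!
Exactness at `F₃` makes `d₃` injective, so it suffices to compare the images of both sides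
under `d₃`. By the Leibniz rule and graded commutativity, `d₃ (x · (y · z))` is the cyclic sum
`d₁x · yz + d₁y · zx + d₁z · xy`, which is invariant under cyclic permutation of `x, y, z`.
-/

section Leibniz

variable {R F1 F2 F3 : Type*} [CommRing R]
  [AddCommGroup F1] [Module R F1] [AddCommGroup F2] [Module R F2] [AddCommGroup F3] [Module R F3]
  {d1 : F1 →ₗ[R] R} {d2 : F2 →ₗ[R] F1} {d3 : F3 →ₗ[R] F2}
  {mul11 : F1 →ₗ[R] F1 →ₗ[R] F2} {mul12 : F1 →ₗ[R] F2 →ₗ[R] F3}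

theorem d3_mul12_mul11_eq_cyclic_sum
    (hLeib11 : ∀ x y : F1, d2 (mul11 x y) = d1 x • y - d1 y • x)
    (hLeib12 : ∀ (x : F1) (z : F2), d3 (mul12 x z) = d1 x • z - mul11 x (d2 z))
    (hskew : ∀ x y : F1, mul11 x y = - mul11 y x) (x y z : F1) :
    d3 (mul12 x (mul11 y z)) = d1 x • mul11 y z + d1 y • mul11 z x + d1 z • mul11 x y := by
  rw [hLeib12, hLeib11, map_sub, map_smul, map_smul, hskew x z]
  module

end Leibniz

theorem buchsbaum_eisenbud_length3_associativity_general
    {R : Type*} [CommRing R]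
    (F1 F2 F3 : Type*)
    [AddCommGroup F1] [Module R F1]
    [AddCommGroup F2] [Module R F2]
    [AddCommGroup F3] [Module R F3]
    (d1 : F1 →ₗ[R] R) (d2 : F2 →ₗ[R] F1) (d3 : F3 →ₗ[R] F2)
    -- `F` is a free resolution of the cyclic module `R/I`:
    (hex3 : LinearMap.ker d3 = ⊥)
    -- the multiplication (unitary: `F₀ = R` acts by scalar multiplication):
    (mul11 : F1 →ₗ[R] F1 →ₗ[R] F2) (mul12 : F1 →ₗ[R] F2 →ₗ[R] F3)
    -- Leibniz rule:
    (hLeib11 : ∀ x y : F1, d2 (mul11 x y) = d1 x • y - d1 y • x)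
    (hLeib12 : ∀ (x : F1) (z : F2), d3 (mul12 x z) = d1 x • z - mul11 x (d2 z))
    -- graded commutativity and vanishing of odd squares:
    (hskew : ∀ x y : F1, mul11 x y = - mul11 y x) :
    -- the multiplication is associative:
    ∀ x y z : F1, mul12 z (mul11 x y) = mul12 x (mul11 y z) := by
  intro x y z
  apply LinearMap.ker_eq_bot.mp hex3
  rw [d3_mul12_mul11_eq_cyclic_sum hLeib11 hLeib12 hskew,
    d3_mul12_mul11_eq_cyclic_sum hLeib11 hLeib12 hskew]
  abel

theorem buchsbaum_eisenbud_length3_associativity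
    {R : Type*} [CommRing R] [IsNoetherianRing R]
    (F1 F2 F3 : Type*)
    [AddCommGroup F1] [Module R F1] [Module.Free R F1] [Module.Finite R F1]
    [AddCommGroup F2] [Module R F2] [Module.Free R F2] [Module.Finite R F2]
    [AddCommGroup F3] [Module R F3] [Module.Free R F3] [Module.Finite R F3]
    (I : Ideal R)
    (d1 : F1 →ₗ[R] R) (d2 : F2 →ₗ[R] F1) (d3 : F3 →ₗ[R] F2)
    -- `F` is a free resolution of the cyclic module `R/I`:
    (hd1 : LinearMap.range d1 = I)
    (hex1 : LinearMap.ker d1 = LinearMap.range d2)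
    (hex2 : LinearMap.ker d2 = LinearMap.range d3)
    (hex3 : LinearMap.ker d3 = ⊥)
    -- the multiplication (unitary: `F₀ = R` acts by scalar multiplication):
    (mul11 : F1 →ₗ[R] F1 →ₗ[R] F2) (mul12 : F1 →ₗ[R] F2 →ₗ[R] F3)
    -- Leibniz rule:
    (hLeib11 : ∀ x y : F1, d2 (mul11 x y) = d1 x • y - d1 y • x)
    (hLeib12 : ∀ (x : F1) (z : F2), d3 (mul12 x z) = d1 x • z - mul11 x (d2 z))
    -- graded commutativity and vanishing of odd squares:
    (hskew : ∀ x y : F1, mul11 x y = - mul11 y x)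
    (halt : ∀ x : F1, mul11 x x = 0) :
    -- the multiplication is associative:
    ∀ x y z : F1, mul12 z (mul11 x y) = mul12 x (mul11 y z) :=
  buchsbaum_eisenbud_length3_associativity_general F1 F2 F3 d1 d2 d3 hex3 mul11 mul12 hLeib11
    hLeib12 hskew
end

section
/- Adopt the iterated trimming setup: (R, 𝔪, k) a regular local ring, I ⊆ R an ideal, (F_•, d_•) a free resolution of R/I with F_1 = F_1' ⊕ (⊕_{i=1}^t R e_0^i) where each e_0^i generates a free direct summand, d_2 = d_2' + d_0^1 + ⋯ + d_0^t with d_2' ∈ Hom(F_2, F_1') and d_0^i ∈ Hom(F_2, R e_0^i), ideals 𝔞_i with d_0^i(F_2) ⊆ 𝔞_i e_0^i, and free resolutions (G_•^i, m_•^i) of R/𝔞_i. Set K' = im(d_1|_{F_1'}), K_0^i = im(d_1|_{R e_0^i}), and J = K' + 𝔞_1 K_0^1 + ⋯ + 𝔞_t K_0^t. Then there exists a morphism of complexes from (⋯ → F_2 →^{d_2'} F_1', with maps d_k for k ≥ 3) to (⋯ → ⊕_{i=1}^t G_1^i →^{−Σ_i d_1(e_0^i) m_1^i} R, with maps ⊕_i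 m_k^i), with components q_k^i : F_{k+1} → G_k^i, and the mapping cone T_• of this morphism is a free resolution of R/J. -/
/-!
The comparison maps are built degree by degree from projectivity of `F`: `q₁ⁱ` lifts
`d₀ⁱ : F₂ → 𝔞ᵢ` along the augmentation `m₁ⁱ : G₁ⁱ → 𝔞ᵢ`, and each further `qₖ₊₁ⁱ` lifts
`qₖⁱ ∘ d` along `mₖ₊₁ⁱ`; this is possible because `qₖⁱ ∘ d` lands in the cycles of `Gⁱ`,
which are boundaries.

Exactness of the cone is the usual chase: for a cycle `(b, y)` the component `b` is a cycle
of `F` (in degree 2 because `y` forces `d₀ⁱ b = m₁ⁱ q₁ⁱ b = 0`), so `b = d a`, and then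
`y ∓ q a` is a cycle, hence a boundary, of `Gⁱ`. At `T₁` one lifts `(z₁, -m₁ⁱ z₂ⁱ) ∈ ker d₁`
to `F₂` instead. Finally the image of `T₁ → R` is `J` because `𝔞ᵢ K₀ⁱ` consists of the
elements `m₁ⁱ(g) d₁(e₀ⁱ)`.
-/

open LinearMap
open Function (Exact)

section Lifting

variable {R : Type*} [CommRing R]

theorem Module.projective_lifting_property_of_range_le {A B P : Type*} [AddCommGroup A]
    [Module R A] [AddCommGroup B] [Module R B] [AddCommGroup P] [Module R P]
    [Module.Projective R P] (g : A →ₗ[R] B) (f : P →ₗ[R] B) (hfg : range f ≤ range g) :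
    ∃ h : P →ₗ[R] A, g ∘ₗ h = f := by
  obtain ⟨h, hh⟩ := Module.projective_lifting_property g.rangeRestrict
    (f.codRestrict (range g) fun x => hfg ⟨x, rfl⟩) g.surjective_rangeRestrict
  exact ⟨h, LinearMap.ext fun x => congr_arg Subtype.val (LinearMap.congr_fun hh x)⟩

variable {P Q : ℕ → Type*} [∀ n, AddCommGroup (P n)] [∀ n, Module R (P n)]
  [∀ n, Module.Projective R (P n)] [∀ n, AddCommGroup (Q n)] [∀ n, Module R (Q n)]
  (dP : ∀ n, P (n + 1) →ₗ[R] P n) (dQ : ∀ n, Q (n + 1) →ₗ[R] Q n)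

theorem exists_chain_map_extending (hP : ∀ n w, dP n (dP (n + 1) w) = 0)
    (hQ : ∀ n, Exact (dQ (n + 1)) (dQ n)) (q₀ : P 0 →ₗ[R] Q 0)
    (h₀ : range (q₀ ∘ₗ dP 0) ≤ range (dQ 0)) :
    ∃ q : ∀ n, P n →ₗ[R] Q n, q 0 = q₀ ∧ ∀ n w, q n (dP n w) = dQ n (q (n + 1) w) := by
  have step : ∀ n (a : P n →ₗ[R] Q n), range (a ∘ₗ dP n) ≤ range (dQ n) →
      ∃ b : P (n + 1) →ₗ[R] Q (n + 1), dQ n ∘ₗ b = a ∘ₗ dP n ∧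
        range (b ∘ₗ dP (n + 1)) ≤ range (dQ (n + 1)) := by
    intro n a ha
    obtain ⟨b, hb⟩ := Module.projective_lifting_property_of_range_le (dQ n) _ ha
    refine ⟨b, hb, ?_⟩
    rintro _ ⟨w, rfl⟩
    refine (hQ n _).1 ?_
    rw [comp_apply, ← comp_apply (dQ n) b, hb, comp_apply, hP, map_zero]
  choose next hnext hgood using step
  let seq : ∀ n, {a : P n →ₗ[R] Q n // range (a ∘ₗ dP n) ≤ range (dQ n)} := fun n =>
    Nat.rec ⟨q₀, h₀⟩ (fun n a => ⟨next n a.1 a.2, hgood n a.1 a.2⟩) n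
  exact ⟨fun n => (seq n).1, rfl, fun n w => (LinearMap.congr_fun (hnext n _ (seq n).2) w).symm⟩

theorem exists_chain_map_lifting {N : Type*} [AddCommGroup N] [Module R N]
    (hP : ∀ n w, dP n (dP (n + 1) w) = 0) (hQ : ∀ n, Exact (dQ (n + 1)) (dQ n))
    (ε : P 0 →ₗ[R] N) (η : Q 0 →ₗ[R] N) (hε : ∀ w, ε (dP 0 w) = 0)
    (hεη : range ε ≤ range η) (hη : Exact (dQ 0) η) :
    ∃ q : ∀ n, P n →ₗ[R] Q n,
      η ∘ₗ q 0 = ε ∧ ∀ n w, q n (dP n w) = dQ n (q (n + 1) w) := by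
  obtain ⟨q₀, hq₀⟩ := Module.projective_lifting_property_of_range_le η ε hεη
  obtain ⟨q, rfl, hq⟩ := exists_chain_map_extending dP dQ hP hQ q₀ <| by
    rintro _ ⟨w, rfl⟩
    refine (hη _).1 ?_
    rw [comp_apply, ← comp_apply η q₀, hq₀, hε]
  exact ⟨q, hq₀, hq⟩

end Lifting

section Cone

variable {R : Type*} [CommRing R] {A B C X Y Z : Type*} [AddCommGroup A] [Module R A]
  [AddCommGroup B] [Module R B] [AddCommGroup C] [Module R C] [AddCommGroup X] [Module R X]
  [AddCommGroup Y] [Module R Y] [AddCommGroup Z] [Module R Z]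

/-- Mapping-cone differential, with the cone sign absorbed into `q`. -/
def coneDiff (f : B →ₗ[R] C) (q : B →ₗ[R] Z) (g : Y →ₗ[R] Z) : B × Y →ₗ[R] C × Z :=
  (f ∘ₗ fst R B Y).prod (q.coprod g)

@[simp]
theorem coneDiff_apply (f : B →ₗ[R] C) (q : B →ₗ[R] Z) (g : Y →ₗ[R] Z) (b : B) (y : Y) :
    coneDiff f q g (b, y) = (f b, q b + g y) :=
  rfl

theorem exact_coneDiff {f' : A →ₗ[R] B} {q' : A →ₗ[R] Y} {g' : X →ₗ[R] Y}
    {f : B →ₗ[R] C} {q : B →ₗ[R] Z} {g : Y →ₗ[R] Z}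
    (hff : ∀ a, f (f' a) = 0) (hq : ∀ a, q (f' a) + g (q' a) = 0) (hg : Exact g' g)
    (hf : ∀ b y, f b = 0 → q b + g y = 0 → b ∈ range f') :
    Exact (coneDiff f' q' g') (coneDiff f q g) := by
  intro p
  constructor
  · obtain ⟨b, y⟩ := p
    intro h
    obtain ⟨hb, hy⟩ := Prod.mk_eq_zero.1 h
    obtain ⟨a, rfl⟩ := hf b y hb hy
    obtain ⟨x, hx⟩ : y - q' a ∈ Set.range g' := by
      refine (hg _).1 ?_
      rw [map_sub, sub_eq_zero]
      exact add_left_cancel (hy.trans (hq a).symm)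
    exact ⟨(a, x), by simp [hx]⟩
  · rintro ⟨⟨a, x⟩, rfl⟩
    simp [hff, hg.apply_apply_eq_zero, hq]

end Cone

theorem Function.Exact.linearMap_piMap {R ι : Type*} [CommRing R] {A B C : ι → Type*}
    [∀ i, AddCommGroup (A i)] [∀ i, Module R (A i)] [∀ i, AddCommGroup (B i)]
    [∀ i, Module R (B i)] [∀ i, AddCommGroup (C i)] [∀ i, Module R (C i)]
    {f : ∀ i, A i →ₗ[R] B i} {g : ∀ i, B i →ₗ[R] C i} (h : ∀ i, Exact (f i) (g i)) :
    Exact (piMap f) (piMap g) := by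
  intro y
  constructor
  · intro hy
    choose x hx using fun i => (h i (y i)).1 (congrFun hy i)
    exact ⟨x, funext hx⟩
  · rintro ⟨x, rfl⟩
    exact funext fun i => (h i).apply_apply_eq_zero (x i)

section Sums

variable {R ι M : Type*} [CommRing R] [Fintype ι] [DecidableEq ι] [AddCommGroup M]
  [Module R M]

theorem LinearMap.apply_prod_eq_add_sum_single {N : Type*} [AddCommGroup N] [Module R N]
    (φ : M × (ι → R) →ₗ[R] N) (p : M × (ι → R)) :
    φ p = φ (p.1, 0) + ∑ i, p.2 i • φ (0, Pi.single i 1) := by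
  have hp : p = (p.1, 0) + ∑ i, p.2 i • ((0 : M), (Pi.single i 1 : ι → R)) := by
    ext
    · simp [Prod.fst_sum]
    · simp [Prod.snd_sum, Pi.single_apply]
  rw [congrArg φ hp, map_add, map_sum]
  simp only [map_smul]

theorem mem_range_sup_iSup_smul_span_singleton_iff {G : ι → Type*} [∀ i, AddCommGroup (G i)]
    [∀ i, Module R (G i)] (f : M →ₗ[R] R) (g : ∀ i, G i →ₗ[R] R) (c : ι → R) (x : R) :
    x ∈ range f ⊔ ⨆ i, range (g i) • Ideal.span {c i} ↔
      ∃ z : M × ∀ i, G i, f z.1 - ∑ i, g i (z.2 i) * c i = x := by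
  constructor
  · intro hx
    obtain ⟨_, ⟨y, rfl⟩, s, hs, rfl⟩ := Submodule.mem_sup.1 hx
    obtain ⟨h, rfl⟩ : ∃ h : ∀ i, G i, ∑ i, g i (h i) * c i = s := by
      refine Submodule.iSup_induction _ (motive := fun s => ∃ h : ∀ i, G i,
        ∑ i, g i (h i) * c i = s) hs (fun i s hs => ?_) ⟨0, by simp⟩ ?_
      · obtain ⟨_, ⟨h, rfl⟩, rfl⟩ := Submodule.mem_smul_span_singleton.1 hs
        refine ⟨Pi.single i h, ?_⟩
        rw [Finset.sum_eq_single i (fun j _ hj => by rw [Pi.single_eq_of_ne hj, map_zero, zero_mul])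
          (by simp), Pi.single_eq_same, smul_eq_mul]
      · rintro _ _ ⟨h, rfl⟩ ⟨h', rfl⟩
        exact ⟨h + h', by simp [add_mul, Finset.sum_add_distrib]⟩
    exact ⟨(y, -h), by simp [sub_eq_add_neg]⟩
  · rintro ⟨⟨y, h⟩, rfl⟩
    refine sub_mem (Submodule.mem_sup_left ⟨y, rfl⟩) (Submodule.mem_sup_right
      (sum_mem fun i _ => Submodule.mem_iSup_of_mem i ?_))
    exact Submodule.mem_smul_span_singleton.2 ⟨_, ⟨h i, rfl⟩, smul_eq_mul ..⟩

end Sums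

section Trimming

variable {R ι F₁' F₂ : Type*} [CommRing R] [AddCommGroup F₁'] [Module R F₁'] [AddCommGroup F₂]
  [Module R F₂] (d₁ : F₁' × (ι → R) →ₗ[R] R) (d₂ : F₂ →ₗ[R] F₁' × (ι → R))
  {G₁ G₂ : ι → Type*} [∀ i, AddCommGroup (G₁ i)] [∀ i, Module R (G₁ i)]
  [∀ i, AddCommGroup (G₂ i)] [∀ i, Module R (G₂ i)]
  (m₁ : ∀ i, G₁ i →ₗ[R] R) (m₂ : ∀ i, G₂ i →ₗ[R] G₁ i) (q₁ : ∀ i, F₂ →ₗ[R] G₁ i)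

theorem trimming_exact_two {F₃ : Type*} [AddCommGroup F₃] [Module R F₃] {G₃ : ι → Type*}
    [∀ i, AddCommGroup (G₃ i)] [∀ i, Module R (G₃ i)] {d₃ : F₃ →ₗ[R] F₂}
    {m₃ : ∀ i, G₃ i →ₗ[R] G₂ i} {q₂ : ∀ i, F₃ →ₗ[R] G₂ i} (hd : Exact d₃ d₂)
    (hm₂ : ∀ i x, m₁ i (m₂ i x) = 0) (hm : ∀ i, Exact (m₃ i) (m₂ i))
    (hq₁ : ∀ i v, m₁ i (q₁ i v) = (d₂ v).2 i) (hq : ∀ i w, q₁ i (d₃ w) = m₂ i (q₂ i w))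
    (w : F₂ × ∀ i, G₂ i) :
    ((d₂ w.1).1, fun i => -q₁ i w.1 + m₂ i (w.2 i)) = 0 ↔
      ∃ u : F₃ × ∀ i, G₃ i, (d₃ u.1, fun i => q₂ i u.1 + m₃ i (u.2 i)) = w := by
  refine exact_coneDiff (q' := pi q₂) (g' := piMap m₃) (f := fst R F₁' (ι → R) ∘ₗ d₂)
    (q := pi fun i => -q₁ i) (g := piMap m₂) (fun a => congrArg Prod.fst (hd.apply_apply_eq_zero a))
    (fun a => funext fun i => ?_) (Function.Exact.linearMap_piMap hm) (fun b y hb hy => ?_) w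
  · show -q₁ i (d₃ a) + m₂ i (q₂ i a) = 0
    rw [hq, neg_add_cancel]
  · -- the `G`-component of the cycle forces `(d₂ b).2 i = m₁ i (q₁ i b) = m₁ i (m₂ i (y i)) = 0`
    refine (hd b).1 (Prod.ext hb (funext fun i => ?_))
    rw [← hq₁, neg_add_eq_zero.1 (congrFun hy i)]
    exact hm₂ i (y i)

variable [Fintype ι] [DecidableEq ι]

theorem trimming_chain_map_zero (hd : ∀ v, d₁ (d₂ v) = 0)
    (hq : ∀ i v, m₁ i (q₁ i v) = (d₂ v).2 i) (v : F₂) :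
    d₁ ((d₂ v).1, 0) = -∑ i, d₁ (0, Pi.single i 1) * m₁ i (q₁ i v) := by
  have h := hd v
  rw [d₁.apply_prod_eq_add_sum_single] at h
  refine eq_neg_of_add_eq_zero_left ?_
  simpa [hq, mul_comm] using h

theorem trimming_exact_one (hd : Exact d₂ d₁) (hm : ∀ i, Exact (m₂ i) (m₁ i))
    (hq : ∀ i v, m₁ i (q₁ i v) = (d₂ v).2 i) (z : F₁' × ∀ i, G₁ i) :
    d₁ (z.1, 0) - ∑ i, m₁ i (z.2 i) * d₁ (0, Pi.single i 1) = 0 ↔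
      ∃ w : F₂ × ∀ i, G₂ i, ((d₂ w.1).1, fun i => -q₁ i w.1 + m₂ i (w.2 i)) = z := by
  constructor
  · intro hz
    obtain ⟨v, hv⟩ : (z.1, fun i => -m₁ i (z.2 i)) ∈ Set.range d₂ := by
      refine (hd _).1 ?_
      rw [d₁.apply_prod_eq_add_sum_single]
      simpa [sub_eq_add_neg] using hz
    have hlift : ∀ i, z.2 i + q₁ i v ∈ Set.range (m₂ i) := fun i =>
      (hm i _).1 (by simp [hq, hv])
    choose g hg using hlift
    exact ⟨(v, g), by ext <;> simp [hv, hg]⟩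
  · rintro ⟨⟨v, g⟩, rfl⟩
    have h := hd.apply_apply_eq_zero v
    rw [d₁.apply_prod_eq_add_sum_single] at h
    simpa [hq, (hm _).apply_apply_eq_zero, sub_eq_add_neg] using h

end Trimming

open IsLocalRing

/-
Encoding: the degree-1 module of `F` is `F1' × (Fin t → R)` with `e₀ⁱ = (0, Pi.single i 1)`,
`FF n` is `F_{n+2}` and `GG i n` is `G^i_{n+1}`, so `d₂' = (d2 ·).1` and `d₀ⁱ = (d2 ·).2 i`.
The cone is `T₀ = R`, `T₁ = F1' × ∀ i, GG i 0` and `T_{n+2} = FF n × ∀ i, GG i (n + 1)`.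
-/
theorem iterated_trimming_complex_is_resolution_general
    {R : Type} [CommRing R]
    (t : ℕ)
    -- the free modules of the resolution `F`
    (F1' : Type) [AddCommGroup F1'] [Module R F1']
    (FF : ℕ → Type) [∀ n, AddCommGroup (FF n)] [∀ n, Module R (FF n)]
    [∀ n, Module.Free R (FF n)]
    -- the free modules of the resolutions `G^i`
    (GG : Fin t → ℕ → Type) [∀ i n, AddCommGroup (GG i n)] [∀ i n, Module R (GG i n)]
    (𝔞 : Fin t → Ideal R)
    -- differentials of `F`
    (d1 : (F1' × (Fin t → R)) →ₗ[R] R)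
    (d2 : FF 0 →ₗ[R] (F1' × (Fin t → R)))
    (d : ∀ n, FF (n + 1) →ₗ[R] FF n)
    -- `F` is a free resolution of `R/I`
    (hFres1 : LinearMap.ker d1 = LinearMap.range d2)
    (hFres2 : LinearMap.ker d2 = LinearMap.range (d 0))
    (hFres3 : ∀ n, LinearMap.ker (d n) = LinearMap.range (d (n + 1)))
    -- `d₀ⁱ(F₂) ⊆ 𝔞 i · e₀ⁱ`
    (ha : ∀ (i : Fin t) (v : FF 0), (d2 v).2 i ∈ 𝔞 i)
    -- differentials of the `G^i`
    (m1 : ∀ i, GG i 0 →ₗ[R] R)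
    (m : ∀ i n, GG i (n + 1) →ₗ[R] GG i n)
    -- `G^i` is a free resolution of `R/𝔞 i`
    (hGres0 : ∀ i, LinearMap.range (m1 i) = 𝔞 i)
    (hGres1 : ∀ i, LinearMap.ker (m1 i) = LinearMap.range (m i 0))
    (hGres2 : ∀ i n, LinearMap.ker (m i n) = LinearMap.range (m i (n + 1))) :
    -- the ideal `J = K' + ∑ᵢ 𝔞ᵢ · K₀ⁱ`
    ∃ q : ∀ (i : Fin t) (n : ℕ), FF n →ₗ[R] GG i n,
      -- `q` is a morphism of complexes as in diagram (2.1):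
      (∀ v : FF 0,
        d1 ((d2 v).1, 0) =
          - ∑ i, d1 (0, Pi.single i 1) * m1 i (q i 0 v)) ∧
      (∀ (i : Fin t) (n : ℕ) (w : FF (n + 1)),
        q i n (d n w) = m i n (q i (n + 1) w)) ∧
      -- the mapping cone `T` of this morphism is a free resolution of `R/J`:
      -- (1) `H₀(T) = R/J`, i.e. the image of `ℓ₁` is `J`:
      (∀ rr : R,
        (rr ∈ (LinearMap.range (d1 ∘ₗ LinearMap.inl R F1' (Fin t → R)) ⊔
          ⨆ i, 𝔞 i • Ideal.span {d1 (0, Pi.single i 1)})) ↔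
        ∃ z : F1' × (∀ i, GG i 0),
          d1 (z.1, 0) - ∑ i, m1 i (z.2 i) * d1 (0, Pi.single i 1) = rr) ∧
      -- (2) exactness at `T₁`:
      (∀ z : F1' × (∀ i, GG i 0),
        d1 (z.1, 0) - ∑ i, m1 i (z.2 i) * d1 (0, Pi.single i 1) = 0 ↔
        ∃ w : FF 0 × (∀ i, GG i 1),
          (((d2 w.1).1, fun i => - q i 0 w.1 + m i 0 (w.2 i)) :
            F1' × (∀ i, GG i 0)) = z) ∧
      -- (3) exactness at `T₂`:
      (∀ w : FF 0 × (∀ i, GG i 1),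
        (((d2 w.1).1, fun i => - q i 0 w.1 + m i 0 (w.2 i)) :
            F1' × (∀ i, GG i 0)) = 0 ↔
        ∃ u : FF 1 × (∀ i, GG i 2),
          ((d 0 u.1, fun i => q i 1 u.1 + m i 1 (u.2 i)) :
            FF 0 × (∀ i, GG i 1)) = w) ∧
      -- (4) exactness at `T_{n+3}` for all `n` (with the cone sign `(-1)^{n-1}`):
      (∀ (n : ℕ) (u : FF (n + 1) × (∀ i, GG i (n + 2))),
        ((d n u.1, fun i => ((-1 : R) ^ n) • q i (n + 1) u.1 + m i (n + 1) (u.2 i)) :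
            FF n × (∀ i, GG i (n + 1))) = 0 ↔
        ∃ v : FF (n + 2) × (∀ i, GG i (n + 3)),
          ((d (n + 1) v.1,
            fun i => ((-1 : R) ^ (n + 1)) • q i (n + 2) v.1 + m i (n + 2) (v.2 i)) :
            FF (n + 1) × (∀ i, GG i (n + 2))) = u) := by
  have hF₁ : Exact d2 d1 := LinearMap.exact_iff.2 hFres1
  have hF₂ : Exact (d 0) d2 := LinearMap.exact_iff.2 hFres2
  have hF : ∀ n, Exact (d (n + 1)) (d n) := fun n => LinearMap.exact_iff.2 (hFres3 n)
  have hG₁ : ∀ i, Exact (m i 0) (m1 i) := fun i => LinearMap.exact_iff.2 (hGres1 i)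
  have hG : ∀ i n, Exact (m i (n + 1)) (m i n) := fun i n => LinearMap.exact_iff.2 (hGres2 i n)
  choose q hq₀ hq using fun i => exists_chain_map_lifting d (m i)
    (fun n => (hF n).apply_apply_eq_zero) (hG i) (proj i ∘ₗ snd R F1' (Fin t → R) ∘ₗ d2) (m1 i)
    (fun w => congrFun (congrArg Prod.snd (hF₂.apply_apply_eq_zero w)) i)
    (by rintro _ ⟨v, rfl⟩; rw [hGres0]; exact ha i v) (hG₁ i)
  have hq₀ : ∀ i v, m1 i (q i 0 v) = (d2 v).2 i := fun i => LinearMap.congr_fun (hq₀ i)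
  refine ⟨q, trimming_chain_map_zero d1 d2 m1 (q · 0) hF₁.apply_apply_eq_zero hq₀, hq,
    fun rr => ?_, trimming_exact_one d1 d2 m1 (m · 0) (q · 0) hF₁ hG₁ hq₀,
    trimming_exact_two d2 m1 (m · 0) (q · 0) hF₂ (fun i => (hG₁ i).apply_apply_eq_zero)
      (fun i => hG i 0) hq₀ (fun i => hq i 0), fun n u => ?_⟩
  · have hJ := mem_range_sup_iSup_smul_span_singleton_iff (d1 ∘ₗ inl R F1' (Fin t → R)) m1
      (fun i => d1 (0, Pi.single i 1)) rr
    simp only [hGres0] at hJ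
    exact hJ
  · refine exact_coneDiff (f' := d (n + 1)) (q' := pi fun i => (-1 : R) ^ (n + 1) • q i (n + 2))
      (g' := piMap fun i => m i (n + 2)) (f := d n) (q := pi fun i => (-1 : R) ^ n • q i (n + 1))
      (g := piMap fun i => m i (n + 1)) (hF n).apply_apply_eq_zero (fun a => funext fun i => ?_)
      (Function.Exact.linearMap_piMap fun i => hG i (n + 1)) (fun b _ hb _ => (hF n b).1 hb) u
    show (-1 : R) ^ n • q i (n + 1) (d (n + 1) a) +
      m i (n + 1) ((-1 : R) ^ (n + 1) • q i (n + 2) a) = 0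
    rw [hq, map_smul, pow_succ, mul_neg_one, neg_smul, add_neg_cancel]

theorem iterated_trimming_complex_is_resolution
    {R : Type} [CommRing R] [IsNoetherianRing R] [IsLocalRing R]
    -- regular local ring: the maximal ideal is generated by a regular sequence
    (hreg : ∃ xs : List R, RingTheory.Sequence.IsRegular R xs ∧
      Ideal.span {a | a ∈ xs} = maximalIdeal R)
    (t : ℕ)
    -- the free modules of the resolution `F`
    (F1' : Type) [AddCommGroup F1'] [Module R F1'] [Module.Free R F1'] [Module.Finite R F1']
    (FF : ℕ → Type) [∀ n, AddCommGroup (FF n)] [∀ n, Module R (FF n)]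
    [∀ n, Module.Free R (FF n)] [∀ n, Module.Finite R (FF n)]
    -- the free modules of the resolutions `G^i`
    (GG : Fin t → ℕ → Type) [∀ i n, AddCommGroup (GG i n)] [∀ i n, Module R (GG i n)]
    [∀ i n, Module.Free R (GG i n)] [∀ i n, Module.Finite R (GG i n)]
    (I : Ideal R) (𝔞 : Fin t → Ideal R)
    -- differentials of `F`
    (d1 : (F1' × (Fin t → R)) →ₗ[R] R)
    (d2 : FF 0 →ₗ[R] (F1' × (Fin t → R)))
    (d : ∀ n, FF (n + 1) →ₗ[R] FF n)
    -- `F` is a free resolution of `R/I`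
    (hFres0 : LinearMap.range d1 = I)
    (hFres1 : LinearMap.ker d1 = LinearMap.range d2)
    (hFres2 : LinearMap.ker d2 = LinearMap.range (d 0))
    (hFres3 : ∀ n, LinearMap.ker (d n) = LinearMap.range (d (n + 1)))
    -- `d₀ⁱ(F₂) ⊆ 𝔞 i · e₀ⁱ`
    (ha : ∀ (i : Fin t) (v : FF 0), (d2 v).2 i ∈ 𝔞 i)
    -- differentials of the `G^i`
    (m1 : ∀ i, GG i 0 →ₗ[R] R)
    (m : ∀ i n, GG i (n + 1) →ₗ[R] GG i n)
    -- `G^i` is a free resolution of `R/𝔞 i`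
    (hGres0 : ∀ i, LinearMap.range (m1 i) = 𝔞 i)
    (hGres1 : ∀ i, LinearMap.ker (m1 i) = LinearMap.range (m i 0))
    (hGres2 : ∀ i n, LinearMap.ker (m i n) = LinearMap.range (m i (n + 1))) :
    -- the ideal `J = K' + ∑ᵢ 𝔞ᵢ · K₀ⁱ`
    ∃ q : ∀ (i : Fin t) (n : ℕ), FF n →ₗ[R] GG i n,
      -- `q` is a morphism of complexes as in diagram (2.1):
      (∀ v : FF 0,
        d1 ((d2 v).1, 0) =
          - ∑ i, d1 (0, Pi.single i 1) * m1 i (q i 0 v)) ∧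
      (∀ (i : Fin t) (n : ℕ) (w : FF (n + 1)),
        q i n (d n w) = m i n (q i (n + 1) w)) ∧
      -- the mapping cone `T` of this morphism is a free resolution of `R/J`:
      -- (1) `H₀(T) = R/J`, i.e. the image of `ℓ₁` is `J`:
      (∀ rr : R,
        (rr ∈ (LinearMap.range (d1 ∘ₗ LinearMap.inl R F1' (Fin t → R)) ⊔
          ⨆ i, 𝔞 i • Ideal.span {d1 (0, Pi.single i 1)})) ↔
        ∃ z : F1' × (∀ i, GG i 0),
          d1 (z.1, 0) - ∑ i, m1 i (z.2 i) * d1 (0, Pi.single i 1) = rr) ∧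
      -- (2) exactness at `T₁`:
      (∀ z : F1' × (∀ i, GG i 0),
        d1 (z.1, 0) - ∑ i, m1 i (z.2 i) * d1 (0, Pi.single i 1) = 0 ↔
        ∃ w : FF 0 × (∀ i, GG i 1),
          (((d2 w.1).1, fun i => - q i 0 w.1 + m i 0 (w.2 i)) :
            F1' × (∀ i, GG i 0)) = z) ∧
      -- (3) exactness at `T₂`:
      (∀ w : FF 0 × (∀ i, GG i 1),
        (((d2 w.1).1, fun i => - q i 0 w.1 + m i 0 (w.2 i)) :
            F1' × (∀ i, GG i 0)) = 0 ↔
        ∃ u : FF 1 × (∀ i, GG i 2),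
          ((d 0 u.1, fun i => q i 1 u.1 + m i 1 (u.2 i)) :
            FF 0 × (∀ i, GG i 1)) = w) ∧
      -- (4) exactness at `T_{n+3}` for all `n` (with the cone sign `(-1)^{n-1}`):
      (∀ (n : ℕ) (u : FF (n + 1) × (∀ i, GG i (n + 2))),
        ((d n u.1, fun i => ((-1 : R) ^ n) • q i (n + 1) u.1 + m i (n + 1) (u.2 i)) :
            FF n × (∀ i, GG i (n + 1))) = 0 ↔
        ∃ v : FF (n + 2) × (∀ i, GG i (n + 3)),
          ((d (n + 1) v.1,
            fun i => ((-1 : R) ^ (n + 1)) • q i (n + 2) v.1 + m i (n + 2) (v.2 i)) :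
            FF (n + 1) × (∀ i, GG i (n + 2))) = u) :=
  iterated_trimming_complex_is_resolution_general t F1' FF GG 𝔞 d1 d2 d hFres1 hFres2 hFres3 ha m1 m
    hGres0 hGres1 hGres2
end

section
/- Adopt the iterated trimming setup ((R,𝔪,k) regular local, I ⊆ R, F_• a free resolution of R/I with F_1 = F_1' ⊕ (⊕_{i=1}^t R e_0^i), d_2 = d_2' + Σ_i d_0^i, ideals 𝔞_i with d_0^i(F_2) ⊆ 𝔞_i e_0^i, resolutions (G_•^i, m_•^i) of R/𝔞_i, comparison maps q_k^i : F_{k+1} → G_k^i) and assume F_• and each G_•^i are length-3 DG-algebras. Then the length-3 iterated trimming complex (T_•, ℓ_•) admits the structure of an associative DG-algebra, whose product may be chosen so that: (1) for f_1, f_1' ∈ F_1': f_1 · f_1' = f_1 ·_F f_1' + Σ_{i=1}^t g_2^i where g_2^i ∈ G_2^i satisfies m_2^i(g_2^i) = q_1^i(f_1 ·_F f_1'); (2) for f_1 ∈ F_1', g_1^i ∈ G_1^i: f_1 · g_1^i = m_1^i(g_1^i)(e_0^i ·_F f_1) + Σ_{j=1}^t g_2^j where m_2^j(g_2^j) = m_1^i(g_1^i)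 q_1^j(e_0^i ·_F f_1) + δ_{ij} d_1(f_1) g_1^i; (3) for g_1^i, g_1'^i ∈ G_1^i: g_1^i · g_1'^i = −(g_1^i ·_{G^i} g_1'^i) d_1(e_0^i); (4) for i < j: g_1^i · g_1^j = m_1^i(g_1^i) m_1^j(g_1^j)(e_0^i ·_F e_0^j) + Σ_{k=1}^t g_2^k where m_2^k(g_2^k) = m_1^i(g_1^i) m_1^j(g_1^j) q_1^k(e_0^i ·_F e_0^j) + δ_{ki} m_1^j(g_1^j) d_1(e_0^j) g_1^i − δ_{kj} m_1^i(g_1^i) d_1(e_0^i) g_1^j; (5) for f_1 ∈ F_1', f_2 ∈ F_2: f_1 · f_2 = f_1 ·_F f_2 + Σ_{i=1}^t g_3^i for suitable g_3^i ∈ G_3^i; (6) f_1 · g_2^i ∈ ⊕_{j=1}^t G_3^j; (7) g_1^i · g_2^i = −(g_1^i ·_{G^i} g_2^i) d_1(e_0^i); (8) for i ≠ j: g_1^i · g_2^j ∈ ⊕_{k=1}^t G_3^k; (9) g_1^i · f_2 = −m_1^i(g_1^i)(e_0^i ·_F f_2) + Σ_{j=1}^t g_3^j for suitable g_3^j ∈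 G_3^j. -/
open IsLocalRing

/-!
The product on `T` is built degree by degree. Let `toF₁ : T₁ → F₁` be `(f, g) ↦ (f, -m₁ g)`,
so that `ℓ₁ = d₁ ∘ toF₁` and `toF₁ ∘ ℓ₂ = d₂ ∘ fst`.

In degree `(1,1)` the `F₂`-component of `z · z'` is `toF₁ z ·_F toF₁ z'`, and its
`G₂ⁱ`-component has to be an alternating lift along `m₂ⁱ` of
`q₁ⁱ(toF₁ z ·_F toF₁ z') + d₁(toF₁ z) z'ᵢ - d₁(toF₁ z') zᵢ`, which lies in `ker m₁ⁱ = im m₂ⁱ`.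
On the block `G₁ⁱ ⊗ G₁ⁱ` it is `-d₁(e₀ⁱ)` times the product of `Gⁱ`. The remaining part is
pulled back from bilinear maps on `F₁` with the `i`-th coordinate erased: there every block
`G₁ʲ` collapses onto the line `R e₀ʲ`, where an antisymmetrisation `θ a b - θ b a` vanishes, so
the blocks `G₁ʲ ⊗ G₁ʲ` are not disturbed.

In degree `(1,2)` there is no choice: `ℓ₃` is injective with image `ker ℓ₂`, and
`ℓ₁(z) w - z · ℓ₂(w)` is a cycle, so the Leibniz rule defines `z · w`. Associativity and the
formulas (5)–(9) are checked after applying the injective map `ℓ₃`.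
-/

universe u

/- `F₁ = F₁' × (Fin t → R)` with `e₀ⁱ = (0, Pi.single i 1)`, `d₂' v = (d2 v).1` and
`d₀ⁱ v = (d2 v).2 i • e₀ⁱ`; `μ11, μ12` and `γ11 i, γ12 i` are the products of `F` and `Gⁱ` in
degrees `(1,1)` and `(1,2)`. `T₁ = F₁' × ∀ i, G₁ⁱ`, `T₂ = F₂ × ∀ i, G₂ⁱ`, `T₃ = F₃ × ∀ i, G₃ⁱ`. -/
section TrimmingSetup

variable {R : Type u} [CommRing R] {t : ℕ}
variable {F1' F2 F3 : Type u}
variable [AddCommGroup F1'] [Module R F1'] [AddCommGroup F2] [Module R F2]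
variable [AddCommGroup F3] [Module R F3]
variable {G1 G2 G3 : Fin t → Type u}
variable [∀ i, AddCommGroup (G1 i)] [∀ i, Module R (G1 i)]
variable [∀ i, AddCommGroup (G2 i)] [∀ i, Module R (G2 i)]
variable [∀ i, AddCommGroup (G3 i)] [∀ i, Module R (G3 i)]

/-- The differential `ℓ₁` of the trimming complex (Remark 2.9). -/
def Tl1 (d1 : (F1' × (Fin t → R)) →ₗ[R] R) (m1 : ∀ i, G1 i →ₗ[R] R) :
    (F1' × (∀ i, G1 i)) → R :=
  fun z => d1 (z.1, 0) - ∑ i, m1 i (z.2 i) * d1 (0, Pi.single i 1)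

/-- The differential `ℓ₂` of the trimming complex (Remark 2.9). -/
def Tl2 (d2 : F2 →ₗ[R] (F1' × (Fin t → R))) (q1 : ∀ i, F2 →ₗ[R] G1 i)
    (m2 : ∀ i, G2 i →ₗ[R] G1 i) :
    (F2 × (∀ i, G2 i)) → (F1' × (∀ i, G1 i)) :=
  fun w => ((d2 w.1).1, fun i => - q1 i w.1 + m2 i (w.2 i))

/-- The differential `ℓ₃` of the trimming complex (Remark 2.9). -/
def Tl3 (d3 : F3 →ₗ[R] F2) (q2 : ∀ i, F3 →ₗ[R] G2 i)
    (m3 : ∀ i, G3 i →ₗ[R] G2 i) :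
    (F3 × (∀ i, G3 i)) → (F2 × (∀ i, G2 i)) :=
  fun u => (d3 u.1, fun i => q2 i u.1 + m3 i (u.2 i))

/-- The axioms for an associative DG-algebra structure `(t11, t12)` on the length-3
trimming complex `T` (Leibniz rule, graded commutativity, vanishing odd squares,
associativity). -/
def TrimDGAxioms (d1 : (F1' × (Fin t → R)) →ₗ[R] R)
    (d2 : F2 →ₗ[R] (F1' × (Fin t → R))) (d3 : F3 →ₗ[R] F2)
    (m1 : ∀ i, G1 i →ₗ[R] R) (m2 : ∀ i, G2 i →ₗ[R] G1 i) (m3 : ∀ i, G3 i →ₗ[R] G2 i)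
    (q1 : ∀ i, F2 →ₗ[R] G1 i) (q2 : ∀ i, F3 →ₗ[R] G2 i)
    (t11 : (F1' × (∀ i, G1 i)) →ₗ[R] (F1' × (∀ i, G1 i)) →ₗ[R] (F2 × (∀ i, G2 i)))
    (t12 : (F1' × (∀ i, G1 i)) →ₗ[R] (F2 × (∀ i, G2 i)) →ₗ[R] (F3 × (∀ i, G3 i))) :
    Prop :=
  (∀ z z', Tl2 d2 q1 m2 (t11 z z') = Tl1 d1 m1 z • z' - Tl1 d1 m1 z' • z) ∧
  (∀ z, t11 z z = 0) ∧
  (∀ z z', t11 z z' = - t11 z' z) ∧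
  (∀ z w, Tl3 d3 q2 m3 (t12 z w) = Tl1 d1 m1 z • w - t11 z (Tl2 d2 q1 m2 w)) ∧
  (∀ z z' z'', t12 z'' (t11 z z') = t12 z (t11 z' z''))

/-- The formulas (1)–(9) of Theorem 3.2 for the product on the trimming complex. -/
def TrimDGFormulas [DecidableEq (Fin t)]
    (d1 : (F1' × (Fin t → R)) →ₗ[R] R) (d3 : F3 →ₗ[R] F2)
    (m1 : ∀ i, G1 i →ₗ[R] R) (m2 : ∀ i, G2 i →ₗ[R] G1 i) (m3 : ∀ i, G3 i →ₗ[R] G2 i)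
    (q1 : ∀ i, F2 →ₗ[R] G1 i) (q2 : ∀ i, F3 →ₗ[R] G2 i)
    (μ11 : (F1' × (Fin t → R)) →ₗ[R] (F1' × (Fin t → R)) →ₗ[R] F2)
    (μ12 : (F1' × (Fin t → R)) →ₗ[R] F2 →ₗ[R] F3)
    (γ11 : ∀ i, G1 i →ₗ[R] G1 i →ₗ[R] G2 i)
    (γ12 : ∀ i, G1 i →ₗ[R] G2 i →ₗ[R] G3 i)
    (t11 : (F1' × (∀ i, G1 i)) →ₗ[R] (F1' × (∀ i, G1 i)) →ₗ[R] (F2 × (∀ i, G2 i)))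
    (t12 : (F1' × (∀ i, G1 i)) →ₗ[R] (F2 × (∀ i, G2 i)) →ₗ[R] (F3 × (∀ i, G3 i))) :
    Prop :=
  -- (1)  F₁' ⊗ F₁' → F₂ ⊕ (⊕ᵢ G₂ⁱ)
  (∀ f f' : F1', ∃ g2 : ∀ i, G2 i,
    (∀ i, m2 i (g2 i) = q1 i (μ11 (f, 0) (f', 0))) ∧
    t11 (f, 0) (f', 0) = (μ11 (f, 0) (f', 0), g2)) ∧
  -- (2)  F₁' ⊗ G₁ⁱ → F₂ ⊕ (⊕ⱼ G₂ʲ)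
  (∀ (f : F1') (i : Fin t) (g : G1 i), ∃ g2 : ∀ j, G2 j,
    (∀ j, m2 j (g2 j) =
      m1 i g • q1 j (μ11 (0, Pi.single i 1) (f, 0)) + Pi.single i (d1 (f, 0) • g) j) ∧
    t11 (f, 0) (0, Pi.single i g) = (m1 i g • μ11 (0, Pi.single i 1) (f, 0), g2)) ∧
  -- (3)  G₁ⁱ ⊗ G₁ⁱ → F₂ ⊕ (⊕ⱼ G₂ʲ)
  (∀ (i : Fin t) (g g' : G1 i),
    t11 (0, Pi.single i g) (0, Pi.single i g') =
      (0, Pi.single i (-(d1 (0, Pi.single i 1) • γ11 i g g')))) ∧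
  -- (4)  G₁ⁱ ⊗ G₁ʲ → F₂ ⊕ (⊕ₖ G₂ᵏ), i < j
  (∀ (i j : Fin t), i < j → ∀ (g : G1 i) (g' : G1 j), ∃ g2 : ∀ k, G2 k,
    (∀ k, m2 k (g2 k) =
      (m1 i g * m1 j g') • q1 k (μ11 (0, Pi.single i 1) (0, Pi.single j 1)) +
      Pi.single i ((m1 j g' * d1 (0, Pi.single j 1)) • g) k -
      Pi.single j ((m1 i g * d1 (0, Pi.single i 1)) • g') k) ∧
    t11 (0, Pi.single i g) (0, Pi.single j g') =
      ((m1 i g * m1 j g') • μ11 (0, Pi.single i 1) (0, Pi.single j 1), g2)) ∧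
  -- (5)  F₁' ⊗ F₂ → F₃ ⊕ (⊕ᵢ G₃ⁱ)
  (∀ (f : F1') (w : F2), ∃ g3 : ∀ i, G3 i,
    t12 (f, 0) (w, 0) = (μ12 (f, 0) w, g3)) ∧
  -- (6)  F₁' ⊗ G₂ⁱ → F₃ ⊕ (⊕ⱼ G₃ʲ)
  (∀ (f : F1') (i : Fin t) (c : G2 i), ∃ g3 : ∀ j, G3 j,
    t12 (f, 0) (0, Pi.single i c) = (0, g3)) ∧
  -- (7)  G₁ⁱ ⊗ G₂ⁱ → F₃ ⊕ (⊕ⱼ G₃ʲ)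
  (∀ (i : Fin t) (g : G1 i) (c : G2 i),
    t12 (0, Pi.single i g) (0, Pi.single i c) =
      (0, Pi.single i (-(d1 (0, Pi.single i 1) • γ12 i g c)))) ∧
  -- (8)  G₁ⁱ ⊗ G₂ʲ → F₃ ⊕ (⊕ₖ G₃ᵏ), i ≠ j
  (∀ (i j : Fin t), i ≠ j → ∀ (g : G1 i) (c : G2 j), ∃ g3 : ∀ k, G3 k,
    t12 (0, Pi.single i g) (0, Pi.single j c) = (0, g3)) ∧
  -- (9)  G₁ⁱ ⊗ F₂ → F₃ ⊕ (⊕ⱼ G₃ʲ)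
  (∀ (i : Fin t) (g : G1 i) (w : F2), ∃ g3 : ∀ j, G3 j,
    t12 (0, Pi.single i g) (w, 0) = (-(m1 i g) • μ12 (0, Pi.single i 1) w, g3))

end TrimmingSetup

namespace LinearMap

variable {R A B C D : Type*} [CommSemiring R] [AddCommMonoid A] [Module R A]

theorem exists_lift_of_forall_mem_range [AddCommMonoid B] [Module R B] [AddCommMonoid C]
    [Module R C] [AddCommMonoid D] [Module R D] [Module.Free R A] [Module.Free R B]
    (π : D →ₗ[R] C) (β : A →ₗ[R] B →ₗ[R] C) (hβ : ∀ a b, β a b ∈ range π) :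
    ∃ L : A →ₗ[R] B →ₗ[R] D, ∀ a b, π (L a b) = β a b := by
  let bA := Module.Free.chooseBasis R A
  let bB := Module.Free.chooseBasis R B
  choose s hs using hβ
  let L : A →ₗ[R] B →ₗ[R] D := bA.constr R fun p => bB.constr R fun q => s (bA p) (bB q)
  have hL : L.compr₂ π = β := ext_basis bA bB fun p q => by simp [L, hs]
  exact ⟨L, congr_fun₂ hL⟩

theorem IsAlt.exists_lift_sub_flip [AddCommGroup C] [Module R C] [AddCommGroup D] [Module R D]
    [Module.Free R A] (π : D →ₗ[R] C) {κ : A →ₗ[R] A →ₗ[R] C} (hκ : κ.IsAlt)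
    (hrange : ∀ a b, κ a b ∈ range π) :
    ∃ θ : A →ₗ[R] A →ₗ[R] D, ∀ a b, π (θ a b) - π (θ b a) = κ a b := by
  classical
  let b := Module.Free.chooseBasis R A
  let _ := IsWellOrder.linearOrder (WellOrderingRel (α := Module.Free.ChooseBasisIndex R A))
  choose s hs using hrange
  -- the strictly upper triangular part of a lift, for a well-order on the basis
  let θ : A →ₗ[R] A →ₗ[R] D := b.constr R fun p => b.constr R fun q =>
    if p < q then s (b p) (b q) else 0
  have hθ : (θ - θ.flip).compr₂ π = κ := ext_basis b b fun p q => by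
    rcases lt_trichotomy p q with h | rfl | h
    · simp [θ, h, h.not_gt, hs]
    · simp [hκ.self_eq_zero]
    · simpa [θ, h, h.not_gt, hs] using hκ.neg (b q) (b p)
  exact ⟨θ, fun a b => by simpa using congr_fun₂ hθ a b⟩

end LinearMap

section Trimming

variable {R : Type u} [CommRing R] {t : ℕ} {F1' F2 F3 : Type u}
  [AddCommGroup F1'] [Module R F1'] [AddCommGroup F2] [Module R F2]
  [AddCommGroup F3] [Module R F3] {G1 G2 G3 : Fin t → Type u}
  [∀ i, AddCommGroup (G1 i)] [∀ i, Module R (G1 i)]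
  [∀ i, AddCommGroup (G2 i)] [∀ i, Module R (G2 i)]
  [∀ i, AddCommGroup (G3 i)] [∀ i, Module R (G3 i)]
  (d1 : (F1' × (Fin t → R)) →ₗ[R] R) (d2 : F2 →ₗ[R] (F1' × (Fin t → R))) (d3 : F3 →ₗ[R] F2)
  (m1 : ∀ i, G1 i →ₗ[R] R) (q1 : ∀ i, F2 →ₗ[R] G1 i) (m2 : ∀ i, G2 i →ₗ[R] G1 i)
  (q2 : ∀ i, F3 →ₗ[R] G2 i) (m3 : ∀ i, G3 i →ₗ[R] G2 i)
  (μ11 : (F1' × (Fin t → R)) →ₗ[R] (F1' × (Fin t → R)) →ₗ[R] F2)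
  (μ12 : (F1' × (Fin t → R)) →ₗ[R] F2 →ₗ[R] F3)
  (γ11 : ∀ i, G1 i →ₗ[R] G1 i →ₗ[R] G2 i) (γ12 : ∀ i, G1 i →ₗ[R] G2 i →ₗ[R] G3 i)

local notation "F₁" => F1' × (Fin t → R)
local notation "e₀" i:max => ((0 : F1'), (Pi.single i (1 : R) : Fin t → R))

def toF₁ : (F1' × (∀ i, G1 i)) →ₗ[R] F₁ :=
  LinearMap.id.prodMap (-LinearMap.pi fun i => m1 i ∘ₗ LinearMap.proj i)

@[simp] lemma toF₁_apply (z : F1' × (∀ i, G1 i)) :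
    toF₁ m1 z = (z.1, fun i => -m1 i (z.2 i)) := rfl

lemma toF₁_inl (f : F1') : toF₁ m1 (f, 0) = (f, 0) := by
  ext <;> simp

lemma toF₁_single (i : Fin t) (g : G1 i) : toF₁ m1 (0, Pi.single i g) = -m1 i g • e₀ i := by
  ext j
  · simp
  · rcases eq_or_ne j i with rfl | hj <;> simp [*]

lemma Tl1_eq_d1_toF₁ (z : F1' × (∀ i, G1 i)) : Tl1 d1 m1 z = d1 (toF₁ m1 z) := by
  have hz : toF₁ m1 z = (z.1, 0) + ∑ i, -m1 i (z.2 i) • e₀ i := by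
    ext j
    · simp [Prod.fst_sum]
    · simp [Prod.snd_sum, Finset.sum_apply, Pi.single_apply]
  simp only [hz, Tl1, map_add, map_sum, map_smul, smul_eq_mul, neg_mul, Finset.sum_neg_distrib,
    sub_eq_add_neg]

lemma toF₁_Tl2 (hq1 : ∀ i v, m1 i (q1 i v) = (d2 v).2 i) (hm1m2 : ∀ i c, m1 i (m2 i c) = 0)
    (w : F2 × (∀ i, G2 i)) : toF₁ m1 (Tl2 d2 q1 m2 w) = d2 w.1 := by
  ext <;> simp [Tl2, hq1, hm1m2]

def Tl2ₗ : (F2 × (∀ i, G2 i)) →ₗ[R] (F1' × (∀ i, G1 i)) where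
  toFun := Tl2 d2 q1 m2
  map_add' _ _ := by ext <;> simp [Tl2]; abel
  map_smul' _ _ := by ext <;> simp [Tl2]

def Tl3ₗ : (F3 × (∀ i, G3 i)) →ₗ[R] (F2 × (∀ i, G2 i)) where
  toFun := Tl3 d3 q2 m3
  map_add' _ _ := by ext <;> simp [Tl3]; abel
  map_smul' _ _ := by ext <;> simp [Tl3]

lemma Tl3ₗ_injective (hFres3 : LinearMap.ker d3 = ⊥) (hGres3 : ∀ i, LinearMap.ker (m3 i) = ⊥) :
    Function.Injective (Tl3ₗ d3 q2 m3) := by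
  rw [← LinearMap.ker_eq_bot, LinearMap.ker_eq_bot']
  rintro ⟨x, y⟩ hxy
  simp only [Tl3ₗ, Tl3, LinearMap.coe_mk, AddHom.coe_mk, Prod.mk_eq_zero, funext_iff,
    Pi.zero_apply] at hxy
  obtain rfl : x = 0 := LinearMap.ker_eq_bot'.mp hFres3 x hxy.1
  ext i
  · rfl
  · exact LinearMap.ker_eq_bot'.mp (hGres3 i) _ (by simpa using hxy.2 i)

lemma ker_Tl2ₗ_le_range_Tl3ₗ (hq1 : ∀ i v, m1 i (q1 i v) = (d2 v).2 i)
    (hq2 : ∀ i w, m2 i (q2 i w) = q1 i (d3 w)) (hm1m2 : ∀ i c, m1 i (m2 i c) = 0)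
    (hFres2 : LinearMap.ker d2 ≤ LinearMap.range d3)
    (hGres2 : ∀ i, LinearMap.ker (m2 i) ≤ LinearMap.range (m3 i)) :
    LinearMap.ker (Tl2ₗ d2 q1 m2) ≤ LinearMap.range (Tl3ₗ d3 q2 m3) := by
  rintro ⟨x, y⟩ hxy
  simp only [LinearMap.mem_ker, Tl2ₗ, Tl2, LinearMap.coe_mk, AddHom.coe_mk, Prod.mk_eq_zero,
    funext_iff, Pi.zero_apply, neg_add_eq_zero] at hxy
  have hd2x : d2 x = 0 := Prod.ext hxy.1 (funext fun i => by simp [← hq1, hxy.2 i, hm1m2])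
  obtain ⟨u, rfl⟩ := hFres2 hd2x
  have hy : ∀ i, y i - q2 i u ∈ LinearMap.range (m3 i) := fun i =>
    hGres2 i (by simp [hq2, hxy.2 i])
  choose v hv using hy
  exact ⟨(u, v), Prod.ext rfl (funext fun i => by simp [Tl3ₗ, Tl3, hv])⟩

def eraseCoord (i : Fin t) : F₁ →ₗ[R] F₁ :=
  LinearMap.id.prodMap (LinearMap.id - LinearMap.single R (fun _ => R) i ∘ₗ LinearMap.proj i)

@[simp] lemma eraseCoord_apply (i : Fin t) (a : F₁) :
    eraseCoord i a = (a.1, a.2 - Pi.single i (a.2 i)) := rfl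

lemma eraseCoord_idem (i : Fin t) (a : F₁) : eraseCoord i (eraseCoord i a) = eraseCoord i a := by
  ext <;> simp

lemma eraseCoord_e₀_self (i : Fin t) : eraseCoord i (e₀ i) = 0 := by
  ext <;> simp

lemma toF₁_eq_eraseCoord_sub (i : Fin t) (z : F1' × (∀ i, G1 i)) :
    toF₁ m1 z = eraseCoord i (toF₁ m1 z) - m1 i (z.2 i) • e₀ i := by
  ext j
  · simp
  · rcases eq_or_ne j i with rfl | hj <;> simp [*]

section mul₁₁Coord

variable (i : Fin t) (θ : (F1' × (Fin t → R)) →ₗ[R] (F1' × (Fin t → R)) →ₗ[R] G2 i)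
  (σ : (F1' × (Fin t → R)) →ₗ[R] G1 i →ₗ[R] G2 i)

/-- The `G₂ⁱ`-component of the product `T₁ ⊗ T₁ → T₂`. -/
def mul₁₁Coord : (F1' × (∀ i, G1 i)) →ₗ[R] (F1' × (∀ i, G1 i)) →ₗ[R] G2 i :=
  let J := eraseCoord i ∘ₗ toF₁ m1
  let p := LinearMap.proj i ∘ₗ LinearMap.snd R F1' (∀ i, G1 i)
  let L := θ.compl₁₂ J J + σ.compl₁₂ J p
  L - L.flip - d1 (e₀ i) • (γ11 i).compl₁₂ p p

lemma mul₁₁Coord_apply (z z' : F1' × (∀ i, G1 i)) :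
    mul₁₁Coord d1 m1 γ11 i θ σ z z' =
      θ (eraseCoord i (toF₁ m1 z)) (eraseCoord i (toF₁ m1 z')) +
          σ (eraseCoord i (toF₁ m1 z)) (z'.2 i) -
        (θ (eraseCoord i (toF₁ m1 z')) (eraseCoord i (toF₁ m1 z)) +
          σ (eraseCoord i (toF₁ m1 z')) (z.2 i)) -
        d1 (e₀ i) • γ11 i (z.2 i) (z'.2 i) := rfl

lemma isAlt_mul₁₁Coord (hGalt : (γ11 i).IsAlt) : (mul₁₁Coord d1 m1 γ11 i θ σ).IsAlt := fun z => by
  simp [mul₁₁Coord_apply, hGalt.self_eq_zero]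

lemma mul₁₁Coord_single_single (j : Fin t) (g g' : G1 j) :
    mul₁₁Coord d1 m1 γ11 i θ σ (0, Pi.single j g) (0, Pi.single j g') =
      Pi.single j (-(d1 (e₀ j) • γ11 j g g')) i := by
  rcases eq_or_ne j i with rfl | hji
  · simp only [mul₁₁Coord_apply, toF₁_single, map_smul, eraseCoord_e₀_self, smul_zero,
      map_zero, LinearMap.zero_apply, add_zero, sub_self, zero_sub, Pi.single_eq_same]
  · simp only [mul₁₁Coord_apply, toF₁_single, map_smul, LinearMap.smul_apply, smul_smul,
      Pi.single_eq_of_ne hji.symm, map_zero, mul_comm (-m1 j g'), add_zero, sub_self, smul_zero]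

lemma m2_mul₁₁Coord
    (hθ : ∀ a b, m2 i (θ a b) - m2 i (θ b a) = q1 i (μ11 (eraseCoord i a) (eraseCoord i b)))
    (hσ : ∀ a h, m2 i (σ a h) =
      d1 (eraseCoord i a) • h - m1 i h • q1 i (μ11 (eraseCoord i a) (e₀ i)))
    (hFalt : μ11.IsAlt) (hGleib1 : ∀ a b, m2 i (γ11 i a b) = m1 i a • b - m1 i b • a)
    (z z' : F1' × (∀ i, G1 i)) :
    m2 i (mul₁₁Coord d1 m1 γ11 i θ σ z z') =
      q1 i (μ11 (toF₁ m1 z) (toF₁ m1 z')) + d1 (toF₁ m1 z) • z'.2 i -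
        d1 (toF₁ m1 z') • z.2 i := by
  have hθ' := hθ (eraseCoord i (toF₁ m1 z)) (eraseCoord i (toF₁ m1 z'))
  rw [eraseCoord_idem, eraseCoord_idem] at hθ'
  rw [toF₁_eq_eraseCoord_sub m1 i z, toF₁_eq_eraseCoord_sub m1 i z', mul₁₁Coord_apply]
  simp only [map_add, map_sub, map_smul, map_neg, hσ, hGleib1, eraseCoord_idem,
    LinearMap.sub_apply, LinearMap.smul_apply, hFalt.self_eq_zero, ← hFalt.neg _ (e₀ i),
    smul_zero, sub_zero]
  linear_combination (norm := module) hθ'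

end mul₁₁Coord

theorem exists_mul₁₁Coord [Module.Free R F1'] (i : Fin t) [Module.Free R (G1 i)]
    (hker : LinearMap.ker (m1 i) ≤ LinearMap.range (m2 i))
    (hq1 : ∀ v, m1 i (q1 i v) = (d2 v).2 i) (hFleib1 : ∀ a b, d2 (μ11 a b) = d1 a • b - d1 b • a)
    (hFalt : μ11.IsAlt) (hGleib1 : ∀ a b, m2 i (γ11 i a b) = m1 i a • b - m1 i b • a)
    (hGalt : (γ11 i).IsAlt) :
    ∃ ν : (F1' × (∀ i, G1 i)) →ₗ[R] (F1' × (∀ i, G1 i)) →ₗ[R] G2 i, ν.IsAlt ∧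
      (∀ z z', m2 i (ν z z') = q1 i (μ11 (toF₁ m1 z) (toF₁ m1 z')) +
        d1 (toF₁ m1 z) • z'.2 i - d1 (toF₁ m1 z') • z.2 i) ∧
      ∀ j (g g' : G1 j),
        ν (0, Pi.single j g) (0, Pi.single j g') = Pi.single j (-(d1 (e₀ j) • γ11 j g g')) i := by
  -- both maps to be lifted land in `ker m₁ⁱ` since `(eraseCoord i a).2 i = 0`
  obtain ⟨θ, hθ⟩ := LinearMap.IsAlt.exists_lift_sub_flip (m2 i)
    (κ := (μ11.compl₁₂ (eraseCoord i) (eraseCoord i)).compr₂ (q1 i))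
    (fun a => by simp [hFalt.self_eq_zero])
    (fun a b => hker (by simp [hq1, hFleib1]))
  obtain ⟨σ, hσ⟩ := LinearMap.exists_lift_of_forall_mem_range (m2 i)
    ((LinearMap.lsmul R (G1 i)).compl₁₂ (d1 ∘ₗ eraseCoord i) LinearMap.id -
      (LinearMap.lsmul R (G1 i)).flip.compl₁₂ (q1 i ∘ₗ μ11.flip (e₀ i) ∘ₗ eraseCoord i) (m1 i))
    (fun a h => hker (by simp [hq1, hFleib1, mul_comm]))
  exact ⟨mul₁₁Coord d1 m1 γ11 i θ σ, isAlt_mul₁₁Coord d1 m1 γ11 i θ σ hGalt,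
    m2_mul₁₁Coord d1 m1 q1 m2 μ11 γ11 i θ σ (by simpa using hθ) (by simpa using hσ) hFalt
      hGleib1,
    mul₁₁Coord_single_single d1 m1 γ11 i θ σ⟩

section mul₁₁

variable (ν : ∀ i, (F1' × (∀ i, G1 i)) →ₗ[R] (F1' × (∀ i, G1 i)) →ₗ[R] G2 i)

def mul₁₁ : (F1' × (∀ i, G1 i)) →ₗ[R] (F1' × (∀ i, G1 i)) →ₗ[R] (F2 × (∀ i, G2 i)) :=
  LinearMap.mk₂ R (fun z z' => (μ11 (toF₁ m1 z) (toF₁ m1 z'), fun i => ν i z z'))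
    (fun _ _ _ => by ext <;> simp [-toF₁_apply]) (fun _ _ _ => by ext <;> simp [-toF₁_apply])
    (fun _ _ _ => by ext <;> simp [-toF₁_apply]) (fun _ _ _ => by ext <;> simp [-toF₁_apply])

@[simp] lemma mul₁₁_fst (z z' : F1' × (∀ i, G1 i)) :
    (mul₁₁ m1 μ11 ν z z').1 = μ11 (toF₁ m1 z) (toF₁ m1 z') := rfl

@[simp] lemma mul₁₁_snd (z z' : F1' × (∀ i, G1 i)) (i : Fin t) :
    (mul₁₁ m1 μ11 ν z z').2 i = ν i z z' := rfl

lemma isAlt_mul₁₁ (hFalt : μ11.IsAlt) (hν : ∀ i, (ν i).IsAlt) : (mul₁₁ m1 μ11 ν).IsAlt :=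
  fun z => by ext <;> simp [hFalt.self_eq_zero, (hν _).self_eq_zero]

lemma Tl2_mul₁₁ (hFleib1 : ∀ a b, d2 (μ11 a b) = d1 a • b - d1 b • a)
    (hν : ∀ i z z', m2 i (ν i z z') = q1 i (μ11 (toF₁ m1 z) (toF₁ m1 z')) +
      d1 (toF₁ m1 z) • z'.2 i - d1 (toF₁ m1 z') • z.2 i)
    (z z' : F1' × (∀ i, G1 i)) :
    Tl2 d2 q1 m2 (mul₁₁ m1 μ11 ν z z') = Tl1 d1 m1 z • z' - Tl1 d1 m1 z' • z := by
  ext i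
  · simp [Tl2, hFleib1, Tl1_eq_d1_toF₁]
  · simp only [Tl2, mul₁₁_fst, mul₁₁_snd, hν, Tl1_eq_d1_toF₁, Prod.snd_sub, Prod.smul_snd,
      Pi.sub_apply, Pi.smul_apply]
    abel

end mul₁₁

section mul₁₂

variable (t11 : (F1' × (∀ i, G1 i)) →ₗ[R] (F1' × (∀ i, G1 i)) →ₗ[R] (F2 × (∀ i, G2 i)))
  (t12 : (F1' × (∀ i, G1 i)) →ₗ[R] (F2 × (∀ i, G2 i)) →ₗ[R] (F3 × (∀ i, G3 i)))

theorem exists_mul₁₂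
    (hleib : ∀ z z', Tl2 d2 q1 m2 (t11 z z') = Tl1 d1 m1 z • z' - Tl1 d1 m1 z' • z)
    (hcomplex : ∀ w, Tl1 d1 m1 (Tl2 d2 q1 m2 w) = 0)
    (hinj : Function.Injective (Tl3ₗ d3 q2 m3))
    (hexact : LinearMap.ker (Tl2ₗ d2 q1 m2) ≤ LinearMap.range (Tl3ₗ d3 q2 m3)) :
    ∃ t12 : (F1' × (∀ i, G1 i)) →ₗ[R] (F2 × (∀ i, G2 i)) →ₗ[R] (F3 × (∀ i, G3 i)),
      ∀ z w, Tl3 d3 q2 m3 (t12 z w) = Tl1 d1 m1 z • w - t11 z (Tl2 d2 q1 m2 w) := by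
  let Ψ := (LinearMap.lsmul R (F2 × (∀ i, G2 i))).comp (d1 ∘ₗ toF₁ m1) -
    t11.compl₂ (Tl2ₗ d2 q1 m2)
  have hΨ : ∀ z w, Ψ z w = Tl1 d1 m1 z • w - t11 z (Tl2 d2 q1 m2 w) := fun z w => by
    simp [Ψ, Tl1_eq_d1_toF₁, Tl2ₗ]
  have hrange : ∀ z w, Ψ z w ∈ LinearMap.range (Tl3ₗ d3 q2 m3) := fun z w => hexact <| by
    rw [LinearMap.mem_ker, hΨ, map_sub, map_smul]
    change Tl1 d1 m1 z • Tl2 d2 q1 m2 w - Tl2 d2 q1 m2 (t11 z (Tl2 d2 q1 m2 w)) = 0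
    rw [hleib, hcomplex, zero_smul, sub_zero, sub_self]
  refine ⟨Ψ.codRestrict₂ _ hinj hrange, fun z w => ?_⟩
  rw [← hΨ, ← LinearMap.codRestrict₂_apply Ψ _ hinj hrange]
  rfl

theorem mul₁₂_assoc
    (hleib11 : ∀ z z', Tl2 d2 q1 m2 (t11 z z') = Tl1 d1 m1 z • z' - Tl1 d1 m1 z' • z)
    (halt : t11.IsAlt)
    (hleib12 : ∀ z w, Tl3 d3 q2 m3 (t12 z w) = Tl1 d1 m1 z • w - t11 z (Tl2 d2 q1 m2 w))
    (hinj : Function.Injective (Tl3ₗ d3 q2 m3)) (z z' z'' : F1' × (∀ i, G1 i)) :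
    t12 z'' (t11 z z') = t12 z (t11 z' z'') := by
  apply hinj
  change Tl3 d3 q2 m3 _ = Tl3 d3 q2 m3 _
  rw [hleib12, hleib12, hleib11, hleib11]
  simp only [map_sub, map_smul, ← halt.neg z' z'', ← halt.neg z z'']
  module

theorem mul₁₂_fst (ν : ∀ i, (F1' × (∀ i, G1 i)) →ₗ[R] (F1' × (∀ i, G1 i)) →ₗ[R] G2 i)
    (hq1 : ∀ i v, m1 i (q1 i v) = (d2 v).2 i) (hm1m2 : ∀ i c, m1 i (m2 i c) = 0)
    (hFleib2 : ∀ a w, d3 (μ12 a w) = d1 a • w - μ11 a (d2 w)) (hFres3 : LinearMap.ker d3 = ⊥)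
    (hleib12 : ∀ z w, Tl3 d3 q2 m3 (t12 z w) =
      Tl1 d1 m1 z • w - mul₁₁ m1 μ11 ν z (Tl2 d2 q1 m2 w))
    (z : F1' × (∀ i, G1 i)) (w : F2 × (∀ i, G2 i)) :
    (t12 z w).1 = μ12 (toF₁ m1 z) w.1 := by
  apply LinearMap.ker_eq_bot.mp hFres3
  have h := congrArg Prod.fst (hleib12 z w)
  simp only [Tl3, Prod.fst_sub, Prod.smul_fst, mul₁₁_fst, Tl1_eq_d1_toF₁,
    toF₁_Tl2 d2 m1 q1 m2 hq1 hm1m2] at h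
  rw [h, hFleib2]

theorem mul₁₂_single_single
    (hGleib2 : ∀ i a c, m3 i (γ12 i a c) = m1 i a • c - γ11 i a (m2 i c))
    (h11 : ∀ i (g g' : G1 i), t11 (0, Pi.single i g) (0, Pi.single i g') =
      (0, Pi.single i (-(d1 (e₀ i) • γ11 i g g'))))
    (hleib12 : ∀ z w, Tl3 d3 q2 m3 (t12 z w) = Tl1 d1 m1 z • w - t11 z (Tl2 d2 q1 m2 w))
    (hinj : Function.Injective (Tl3ₗ d3 q2 m3)) (i : Fin t) (g : G1 i) (c : G2 i) :
    t12 (0, Pi.single i g) (0, Pi.single i c) =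
      (0, Pi.single i (-(d1 (e₀ i) • γ12 i g c))) := by
  have hTl2 : Tl2 d2 q1 m2 (0, Pi.single i c) = (0, Pi.single i (m2 i c)) := by
    ext j
    · simp [Tl2]
    · rcases eq_or_ne j i with rfl | hj <;> simp [Tl2, *]
  apply hinj
  change Tl3 d3 q2 m3 _ = Tl3 d3 q2 m3 _
  rw [hleib12, hTl2, h11, Tl1_eq_d1_toF₁, toF₁_single]
  ext j
  · simp [Tl3]
  · rcases eq_or_ne j i with rfl | hj
    · simp only [Tl3, Prod.snd_sub, Prod.smul_snd, Pi.sub_apply, Pi.smul_apply,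
        Pi.single_eq_same, map_zero, zero_add, map_neg, map_smul, hGleib2, smul_eq_mul]
      module
    · simp [Tl3, hj]

theorem trimDGFormulas_mul₁₁
    (ν : ∀ i, (F1' × (∀ i, G1 i)) →ₗ[R] (F1' × (∀ i, G1 i)) →ₗ[R] G2 i)
    (hq1 : ∀ i v, m1 i (q1 i v) = (d2 v).2 i) (hm1m2 : ∀ i c, m1 i (m2 i c) = 0)
    (hFres3 : LinearMap.ker d3 = ⊥) (hFalt : μ11.IsAlt)
    (hFleib2 : ∀ a w, d3 (μ12 a w) = d1 a • w - μ11 a (d2 w))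
    (hGleib2 : ∀ i a c, m3 i (γ12 i a c) = m1 i a • c - γ11 i a (m2 i c))
    (hν : ∀ i z z', m2 i (ν i z z') = q1 i (μ11 (toF₁ m1 z) (toF₁ m1 z')) +
      d1 (toF₁ m1 z) • z'.2 i - d1 (toF₁ m1 z') • z.2 i)
    (hνsingle : ∀ i j (g g' : G1 j),
      ν i (0, Pi.single j g) (0, Pi.single j g') = Pi.single j (-(d1 (e₀ j) • γ11 j g g')) i)
    (hleib12 : ∀ z w, Tl3 d3 q2 m3 (t12 z w) =
      Tl1 d1 m1 z • w - mul₁₁ m1 μ11 ν z (Tl2 d2 q1 m2 w))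
    (hinj : Function.Injective (Tl3ₗ d3 q2 m3)) :
    TrimDGFormulas d1 d3 m1 m2 m3 q1 q2 μ11 μ12 γ11 γ12 (mul₁₁ m1 μ11 ν) t12 := by
  have h11 : ∀ i (g g' : G1 i), mul₁₁ m1 μ11 ν (0, Pi.single i g) (0, Pi.single i g') =
      (0, Pi.single i (-(d1 (e₀ i) • γ11 i g g'))) := fun i g g' =>
    Prod.ext (by simp only [mul₁₁_fst, toF₁_single, map_smul, LinearMap.smul_apply,
      hFalt.self_eq_zero, smul_zero]) (funext fun j => hνsingle j i g g')
  have h12 := mul₁₂_fst d1 d2 d3 m1 q1 m2 q2 m3 μ11 μ12 t12 ν hq1 hm1m2 hFleib2 hFres3 hleib12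
  refine ⟨fun f f' => ⟨_, fun i => ?_, Prod.ext ?_ rfl⟩,
    fun f i g => ⟨_, fun j => ?_, Prod.ext ?_ rfl⟩, h11,
    fun i j _ g g' => ⟨_, fun k => ?_, Prod.ext ?_ rfl⟩, fun f w => ⟨_, Prod.ext ?_ rfl⟩,
    fun f i c => ⟨_, Prod.ext ?_ rfl⟩,
    mul₁₂_single_single d1 d2 d3 m1 q1 m2 q2 m3 γ11 γ12 _ t12 hGleib2 h11 hleib12 hinj,
    fun i j _ g c => ⟨_, Prod.ext ?_ rfl⟩, fun i g w => ⟨_, Prod.ext ?_ rfl⟩⟩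
  all_goals simp only [mul₁₁_fst, mul₁₁_snd, hν, h12, toF₁_inl, toF₁_single, map_smul,
    LinearMap.smul_apply, smul_zero, sub_zero, add_zero, map_zero, Pi.single_smul, Pi.smul_apply,
    Pi.zero_apply]
  · rw [← hFalt.neg (f, 0), map_neg]
    module
  · rw [← hFalt.neg (f, 0)]
    module
  · module
  · module

end mul₁₂

end Trimming

theorem trimming_complex_dg_algebra_structure_general
    {R : Type u} [CommRing R]
    (t : ℕ)
    (F1' F2 F3 : Type u)
    [AddCommGroup F1'] [Module R F1'] [Module.Free R F1']
    [AddCommGroup F2] [Module R F2]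
    [AddCommGroup F3] [Module R F3]
    (G1 G2 G3 : Fin t → Type u)
    [∀ i, AddCommGroup (G1 i)] [∀ i, Module R (G1 i)]
    [∀ i, Module.Free R (G1 i)]
    [∀ i, AddCommGroup (G2 i)] [∀ i, Module R (G2 i)]
    [∀ i, AddCommGroup (G3 i)] [∀ i, Module R (G3 i)]
    (d1 : (F1' × (Fin t → R)) →ₗ[R] R)
    (d2 : F2 →ₗ[R] (F1' × (Fin t → R)))
    (d3 : F3 →ₗ[R] F2)
    -- `F` is a free resolution of `R/I`
    (hFres1 : LinearMap.ker d1 = LinearMap.range d2)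
    (hFres2 : LinearMap.ker d2 = LinearMap.range d3)
    (hFres3 : LinearMap.ker d3 = ⊥)
    (m1 : ∀ i, G1 i →ₗ[R] R) (m2 : ∀ i, G2 i →ₗ[R] G1 i) (m3 : ∀ i, G3 i →ₗ[R] G2 i)
    -- `G^i` is a free resolution of `R/𝔞 i`
    (hGres1 : ∀ i, LinearMap.ker (m1 i) = LinearMap.range (m2 i))
    (hGres2 : ∀ i, LinearMap.ker (m2 i) = LinearMap.range (m3 i))
    (hGres3 : ∀ i, LinearMap.ker (m3 i) = ⊥)
    -- the comparison maps of the trimming complex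
    (q1 : ∀ i, F2 →ₗ[R] G1 i) (q2 : ∀ i, F3 →ₗ[R] G2 i)
    (hq1 : ∀ i v, m1 i (q1 i v) = (d2 v).2 i)
    (hq2 : ∀ i w, m2 i (q2 i w) = q1 i (d3 w))
    -- DG-algebra structure on `F`
    (μ11 : (F1' × (Fin t → R)) →ₗ[R] (F1' × (Fin t → R)) →ₗ[R] F2)
    (μ12 : (F1' × (Fin t → R)) →ₗ[R] F2 →ₗ[R] F3)
    (hFleib1 : ∀ a b, d2 (μ11 a b) = d1 a • b - d1 b • a)
    (hFalt : ∀ a, μ11 a a = 0)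
    (hFleib2 : ∀ a z, d3 (μ12 a z) = d1 a • z - μ11 a (d2 z))
    -- DG-algebra structures on the `G^i`
    (γ11 : ∀ i, G1 i →ₗ[R] G1 i →ₗ[R] G2 i)
    (γ12 : ∀ i, G1 i →ₗ[R] G2 i →ₗ[R] G3 i)
    (hGleib1 : ∀ i a b, m2 i (γ11 i a b) = m1 i a • b - m1 i b • a)
    (hGalt : ∀ i a, γ11 i a a = 0)
    (hGleib2 : ∀ i a c, m3 i (γ12 i a c) = m1 i a • c - γ11 i a (m2 i c)) :
    -- conclusion: `T` admits an associative DG-algebra structure with the products of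
    -- Theorem 3.2
    ∃ (t11 : (F1' × (∀ i, G1 i)) →ₗ[R] (F1' × (∀ i, G1 i)) →ₗ[R] (F2 × (∀ i, G2 i)))
      (t12 : (F1' × (∀ i, G1 i)) →ₗ[R] (F2 × (∀ i, G2 i)) →ₗ[R] (F3 × (∀ i, G3 i))),
      TrimDGAxioms d1 d2 d3 m1 m2 m3 q1 q2 t11 t12 ∧
      TrimDGFormulas d1 d3 m1 m2 m3 q1 q2 μ11 μ12 γ11 γ12 t11 t12 := by
  have hm1m2 : ∀ i c, m1 i (m2 i c) = 0 := fun i c => (hGres1 i).ge ⟨c, rfl⟩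
  choose ν hνalt hν hνsingle using fun i => exists_mul₁₁Coord d1 d2 m1 q1 m2 μ11 γ11 i
    (hGres1 i).le (hq1 i) hFleib1 hFalt (hGleib1 i) (hGalt i)
  have hleib11 := Tl2_mul₁₁ d1 d2 m1 q1 m2 μ11 ν hFleib1 hν
  have halt := isAlt_mul₁₁ m1 μ11 ν hFalt hνalt
  have hinj := Tl3ₗ_injective d3 q2 m3 hFres3 hGres3
  have hcomplex : ∀ w, Tl1 d1 m1 (Tl2 d2 q1 m2 w) = 0 := fun w => by
    rw [Tl1_eq_d1_toF₁, toF₁_Tl2 d2 m1 q1 m2 hq1 hm1m2]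
    exact hFres1.ge ⟨w.1, rfl⟩
  obtain ⟨t12, hleib12⟩ := exists_mul₁₂ d1 d2 d3 m1 q1 m2 q2 m3 _ hleib11 hcomplex hinj
    (ker_Tl2ₗ_le_range_Tl3ₗ d2 d3 m1 q1 m2 q2 m3 hq1 hq2 hm1m2 hFres2.le fun i => (hGres2 i).le)
  exact ⟨mul₁₁ m1 μ11 ν, t12,
    ⟨hleib11, halt, fun z z' => (halt.neg z' z).symm, hleib12,
      mul₁₂_assoc d1 d2 d3 m1 q1 m2 q2 m3 _ t12 hleib11 halt hleib12 hinj⟩,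
    trimDGFormulas_mul₁₁ d1 d2 d3 m1 q1 m2 q2 m3 μ11 μ12 γ11 γ12 t12 ν hq1 hm1m2 hFres3 hFalt
      hFleib2 hGleib2 hν hνsingle hleib12 hinj⟩

theorem trimming_complex_dg_algebra_structure
    {R : Type u} [CommRing R] [IsNoetherianRing R] [IsLocalRing R]
    -- regular local ring: the maximal ideal is generated by a regular sequence
    (hreg : ∃ xs : List R, RingTheory.Sequence.IsRegular R xs ∧
      Ideal.span {a | a ∈ xs} = maximalIdeal R)
    (t : ℕ)
    (F1' F2 F3 : Type u)
    [AddCommGroup F1'] [Module R F1'] [Module.Free R F1'] [Module.Finite R F1']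
    [AddCommGroup F2] [Module R F2] [Module.Free R F2] [Module.Finite R F2]
    [AddCommGroup F3] [Module R F3] [Module.Free R F3] [Module.Finite R F3]
    (G1 G2 G3 : Fin t → Type u)
    [∀ i, AddCommGroup (G1 i)] [∀ i, Module R (G1 i)]
    [∀ i, Module.Free R (G1 i)] [∀ i, Module.Finite R (G1 i)]
    [∀ i, AddCommGroup (G2 i)] [∀ i, Module R (G2 i)]
    [∀ i, Module.Free R (G2 i)] [∀ i, Module.Finite R (G2 i)]
    [∀ i, AddCommGroup (G3 i)] [∀ i, Module R (G3 i)]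
    [∀ i, Module.Free R (G3 i)] [∀ i, Module.Finite R (G3 i)]
    (I : Ideal R) (𝔞 : Fin t → Ideal R)
    (d1 : (F1' × (Fin t → R)) →ₗ[R] R)
    (d2 : F2 →ₗ[R] (F1' × (Fin t → R)))
    (d3 : F3 →ₗ[R] F2)
    -- `F` is a free resolution of `R/I`
    (hFres0 : LinearMap.range d1 = I)
    (hFres1 : LinearMap.ker d1 = LinearMap.range d2)
    (hFres2 : LinearMap.ker d2 = LinearMap.range d3)
    (hFres3 : LinearMap.ker d3 = ⊥)
    -- `d₀ⁱ(F₂) ⊆ 𝔞 i e₀ⁱ`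
    (ha : ∀ (i : Fin t) (v : F2), (d2 v).2 i ∈ 𝔞 i)
    (m1 : ∀ i, G1 i →ₗ[R] R) (m2 : ∀ i, G2 i →ₗ[R] G1 i) (m3 : ∀ i, G3 i →ₗ[R] G2 i)
    -- `G^i` is a free resolution of `R/𝔞 i`
    (hGres0 : ∀ i, LinearMap.range (m1 i) = 𝔞 i)
    (hGres1 : ∀ i, LinearMap.ker (m1 i) = LinearMap.range (m2 i))
    (hGres2 : ∀ i, LinearMap.ker (m2 i) = LinearMap.range (m3 i))
    (hGres3 : ∀ i, LinearMap.ker (m3 i) = ⊥)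
    -- the comparison maps of the trimming complex
    (q1 : ∀ i, F2 →ₗ[R] G1 i) (q2 : ∀ i, F3 →ₗ[R] G2 i)
    (hq1 : ∀ i v, m1 i (q1 i v) = (d2 v).2 i)
    (hq2 : ∀ i w, m2 i (q2 i w) = q1 i (d3 w))
    -- DG-algebra structure on `F`
    (μ11 : (F1' × (Fin t → R)) →ₗ[R] (F1' × (Fin t → R)) →ₗ[R] F2)
    (μ12 : (F1' × (Fin t → R)) →ₗ[R] F2 →ₗ[R] F3)
    (hFleib1 : ∀ a b, d2 (μ11 a b) = d1 a • b - d1 b • a)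
    (hFalt : ∀ a, μ11 a a = 0)
    (hFskew : ∀ a b, μ11 a b = - μ11 b a)
    (hFleib2 : ∀ a z, d3 (μ12 a z) = d1 a • z - μ11 a (d2 z))
    (hFassoc : ∀ a b c, μ12 c (μ11 a b) = μ12 a (μ11 b c))
    -- DG-algebra structures on the `G^i`
    (γ11 : ∀ i, G1 i →ₗ[R] G1 i →ₗ[R] G2 i)
    (γ12 : ∀ i, G1 i →ₗ[R] G2 i →ₗ[R] G3 i)
    (hGleib1 : ∀ i a b, m2 i (γ11 i a b) = m1 i a • b - m1 i b • a)
    (hGalt : ∀ i a, γ11 i a a = 0)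
    (hGskew : ∀ i a b, γ11 i a b = - γ11 i b a)
    (hGleib2 : ∀ i a c, m3 i (γ12 i a c) = m1 i a • c - γ11 i a (m2 i c))
    (hGassoc : ∀ i a b c, γ12 i c (γ11 i a b) = γ12 i a (γ11 i b c)) :
    -- conclusion: `T` admits an associative DG-algebra structure with the products of
    -- Theorem 3.2
    ∃ (t11 : (F1' × (∀ i, G1 i)) →ₗ[R] (F1' × (∀ i, G1 i)) →ₗ[R] (F2 × (∀ i, G2 i)))
      (t12 : (F1' × (∀ i, G1 i)) →ₗ[R] (F2 × (∀ i, G2 i)) →ₗ[R] (F3 × (∀ i, G3 i))),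
      TrimDGAxioms d1 d2 d3 m1 m2 m3 q1 q2 t11 t12 ∧
      TrimDGFormulas d1 d3 m1 m2 m3 q1 q2 μ11 μ12 γ11 γ12 t11 t12 :=
  trimming_complex_dg_algebra_structure_general t F1' F2 F3 G1 G2 G3 d1 d2 d3 hFres1 hFres2 hFres3
    m1 m2 m3 hGres1 hGres2 hGres3 q1 q2 hq1 hq2 μ11 μ12 hFleib1 hFalt hFleib2 γ11 γ12 hGleib1 hGalt
    hGleib2
end

section
/- Adopt the iterated trimming setup with F_• and each G_•^i length-3 minimal DG-algebras, and equip T_• with the DG-algebra structure of the main theorem. Then the k-linear map T̄_• → F̄_• defined by f̄_i ↦ f̄_i for f_i ∈ F_i and ḡ_i^j ↦ 0 for g_i^j ∈ G_i^j is a homomorphism of graded k-algebras, where bars denote − ⊗_R k. -/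
open IsLocalRing

/-!
STATEMENT 5 (Corollary 3.4, second part): in the length-3 iterated trimming setup with
`F_•` and the `G^i_•` minimal DG-algebras, equip `T` with the DG-algebra structure of
Theorem 3.2.  Then the map `T̄_• → F̄_•` sending `f̄ᵢ ↦ f̄ᵢ` and `ḡᵢʲ ↦ 0` is a
homomorphism of graded `k`-algebras.  Concretely (identifying `T̄ₙ = Tₙ/𝔪Tₙ` and
`F̄ₙ = Fₙ/𝔪Fₙ`), the map is induced by the projections `T₁ → F₁' ⊆ F₁`, `T₂ → F₂`,
`T₃ → F₃`; being `k`-linear and degree-preserving, the homomorphism property is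
exactly multiplicativity modulo `𝔪`, stated below for both products.
-/
universe u

/-!
In each formula (1)–(9) of Theorem 3.2, the `F`-component of a product of two summands of `T`
is the `F`-product when both factors lie in `F`, and otherwise vanishes or is a multiple of some
`m₁ⁱ(g) ∈ 𝔪`, by minimality of `Gⁱ`. Since the products are bilinear and `T₁`, `T₂` are spanned
by their summands, this gives multiplicativity modulo `𝔪`; the products the formulas do not list
(`Gⁱ₁ ⊗ F₁'`, and `Gⁱ₁ ⊗ Gʲ₁` for `i > j`) are recovered by graded commutativity.
-/

open Submodule

theorem LinearMap.apply_apply_mem_of_span_eq_top {R M N P : Type*} [CommSemiring R]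
    [AddCommMonoid M] [Module R M] [AddCommMonoid N] [Module R N] [AddCommMonoid P] [Module R P]
    (B : M →ₗ[R] N →ₗ[R] P) {s : Set M} {t : Set N} (hs : span R s = ⊤) (ht : span R t = ⊤)
    {S : Submodule R P} (h : ∀ x ∈ s, ∀ y ∈ t, B x y ∈ S) (x : M) (y : N) : B x y ∈ S := by
  have hxy : B x y ∈ map₂ B (span R s) (span R t) := by
    rw [hs, ht]
    exact apply_mem_map₂ B mem_top mem_top
  rw [map₂_span_span] at hxy
  refine span_le.mpr ?_ hxy
  rintro _ ⟨x, hx, y, hy, rfl⟩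
  exact h x hx y hy

theorem Prod.span_inl_union_single_eq_top {R M ι : Type*} [Semiring R] [Finite ι]
    [DecidableEq ι] {N : ι → Type*} [AddCommMonoid M] [Module R M] [∀ i, AddCommMonoid (N i)]
    [∀ i, Module R (N i)] :
    span R (Set.range (fun m : M => (m, (0 : ∀ i, N i))) ∪
      ⋃ i, Set.range (fun n : N i => ((0 : M), Pi.single i n))) = ⊤ := by
  have hinl : Set.range (fun m : M => (m, (0 : ∀ i, N i))) =
      (LinearMap.range (LinearMap.inl R M (∀ i, N i)) : Set _) := by
    rw [LinearMap.coe_range]; rfl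
  have hsingle : ∀ i, Set.range (fun n : N i => ((0 : M), Pi.single i n)) =
      (LinearMap.range (LinearMap.inr R M _ ∘ₗ LinearMap.single R N i) : Set _) := fun i => by
    rw [LinearMap.coe_range]; rfl
  simp only [hinl, hsingle, span_union, span_iUnion, span_eq, LinearMap.range_comp]
  rw [← Submodule.map_iSup, LinearMap.iSup_range_single, Submodule.map_top,
    LinearMap.sup_range_inl_inr]

section TrimmingProjection

variable {R : Type u} [CommRing R] {t : ℕ}
variable {F1' F2 F3 : Type u}
variable [AddCommGroup F1'] [Module R F1'] [AddCommGroup F2] [Module R F2]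
variable [AddCommGroup F3] [Module R F3]
variable {G1 G2 G3 : Fin t → Type u}
variable [∀ i, AddCommGroup (G1 i)] [∀ i, Module R (G1 i)]
variable [∀ i, AddCommGroup (G2 i)] [∀ i, Module R (G2 i)]
variable [∀ i, AddCommGroup (G3 i)] [∀ i, Module R (G3 i)]
variable {d1 : (F1' × (Fin t → R)) →ₗ[R] R} {d3 : F3 →ₗ[R] F2}
variable {m1 : ∀ i, G1 i →ₗ[R] R} {m2 : ∀ i, G2 i →ₗ[R] G1 i} {m3 : ∀ i, G3 i →ₗ[R] G2 i}
variable {q1 : ∀ i, F2 →ₗ[R] G1 i} {q2 : ∀ i, F3 →ₗ[R] G2 i}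
variable {μ11 : (F1' × (Fin t → R)) →ₗ[R] (F1' × (Fin t → R)) →ₗ[R] F2}
variable {μ12 : (F1' × (Fin t → R)) →ₗ[R] F2 →ₗ[R] F3}
variable {γ11 : ∀ i, G1 i →ₗ[R] G1 i →ₗ[R] G2 i} {γ12 : ∀ i, G1 i →ₗ[R] G2 i →ₗ[R] G3 i}
variable {t11 : (F1' × (∀ i, G1 i)) →ₗ[R] (F1' × (∀ i, G1 i)) →ₗ[R] (F2 × (∀ i, G2 i))}
variable {t12 : (F1' × (∀ i, G1 i)) →ₗ[R] (F2 × (∀ i, G2 i)) →ₗ[R] (F3 × (∀ i, G3 i))}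

theorem fst_t11_inl_inl (hform : TrimDGFormulas d1 d3 m1 m2 m3 q1 q2 μ11 μ12 γ11 γ12 t11 t12)
    (f f' : F1') : (t11 (f, 0) (f', 0)).1 = μ11 (f, 0) (f', 0) := by
  obtain ⟨g2, -, h⟩ := hform.1 f f'
  rw [h]

theorem fst_t11_inl_single_mem [IsLocalRing R]
    (hform : TrimDGFormulas d1 d3 m1 m2 m3 q1 q2 μ11 μ12 γ11 γ12 t11 t12)
    (hminG1 : ∀ i g, m1 i g ∈ maximalIdeal R) (f : F1') (i : Fin t) (g : G1 i) :
    (t11 (f, 0) (0, Pi.single i g)).1 ∈ maximalIdeal R • (⊤ : Submodule R F2) := by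
  obtain ⟨g2, -, h⟩ := hform.2.1 f i g
  rw [h]
  exact smul_mem_smul (hminG1 i g) mem_top

theorem fst_t11_single_inl_mem [IsLocalRing R] (hskew : ∀ z z', t11 z z' = - t11 z' z)
    (hform : TrimDGFormulas d1 d3 m1 m2 m3 q1 q2 μ11 μ12 γ11 γ12 t11 t12)
    (hminG1 : ∀ i g, m1 i g ∈ maximalIdeal R) (i : Fin t) (g : G1 i) (f : F1') :
    (t11 (0, Pi.single i g) (f, 0)).1 ∈ maximalIdeal R • (⊤ : Submodule R F2) := by
  rw [hskew]
  exact neg_mem (fst_t11_inl_single_mem hform hminG1 f i g)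

theorem fst_t11_single_single_mem [IsLocalRing R] (hskew : ∀ z z', t11 z z' = - t11 z' z)
    (hform : TrimDGFormulas d1 d3 m1 m2 m3 q1 q2 μ11 μ12 γ11 γ12 t11 t12)
    (hminG1 : ∀ i g, m1 i g ∈ maximalIdeal R) (i j : Fin t) (g : G1 i) (g' : G1 j) :
    (t11 (0, Pi.single i g) (0, Pi.single j g')).1 ∈ maximalIdeal R • (⊤ : Submodule R F2) := by
  have of_lt : ∀ i j, i < j → ∀ (g : G1 i) (g' : G1 j),
      (t11 (0, Pi.single i g) (0, Pi.single j g')).1 ∈ maximalIdeal R • (⊤ : Submodule R F2) := by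
    intro i j hij g g'
    obtain ⟨g2, -, h⟩ := hform.2.2.2.1 i j hij g g'
    rw [h]
    exact smul_mem_smul (Ideal.mul_mem_right _ _ (hminG1 i g)) mem_top
  rcases lt_trichotomy i j with hij | rfl | hij
  · exact of_lt i j hij g g'
  · rw [hform.2.2.1 i g g']
    exact zero_mem _
  · rw [hskew]
    exact neg_mem (of_lt j i hij g' g)

theorem fst_t12_inl_inl (hform : TrimDGFormulas d1 d3 m1 m2 m3 q1 q2 μ11 μ12 γ11 γ12 t11 t12)
    (f : F1') (w : F2) : (t12 (f, 0) (w, 0)).1 = μ12 (f, 0) w := by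
  obtain ⟨g3, h⟩ := hform.2.2.2.2.1 f w
  rw [h]

theorem fst_t12_inl_single (hform : TrimDGFormulas d1 d3 m1 m2 m3 q1 q2 μ11 μ12 γ11 γ12 t11 t12)
    (f : F1') (i : Fin t) (c : G2 i) : (t12 (f, 0) (0, Pi.single i c)).1 = 0 := by
  obtain ⟨g3, h⟩ := hform.2.2.2.2.2.1 f i c
  rw [h]

theorem fst_t12_single_inl_mem [IsLocalRing R]
    (hform : TrimDGFormulas d1 d3 m1 m2 m3 q1 q2 μ11 μ12 γ11 γ12 t11 t12)
    (hminG1 : ∀ i g, m1 i g ∈ maximalIdeal R) (i : Fin t) (g : G1 i) (w : F2) :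
    (t12 (0, Pi.single i g) (w, 0)).1 ∈ maximalIdeal R • (⊤ : Submodule R F3) := by
  obtain ⟨g3, h⟩ := hform.2.2.2.2.2.2.2.2 i g w
  rw [h]
  exact smul_mem_smul (neg_mem (hminG1 i g)) mem_top

theorem fst_t12_single_single
    (hform : TrimDGFormulas d1 d3 m1 m2 m3 q1 q2 μ11 μ12 γ11 γ12 t11 t12)
    (i j : Fin t) (g : G1 i) (c : G2 j) : (t12 (0, Pi.single i g) (0, Pi.single j c)).1 = 0 := by
  rcases eq_or_ne i j with rfl | hij
  · rw [hform.2.2.2.2.2.2.1 i g c]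
  · obtain ⟨g3, h⟩ := hform.2.2.2.2.2.2.2.1 i j hij g c
    rw [h]

theorem fst_t11_sub_mem [IsLocalRing R] (hskew : ∀ z z', t11 z z' = - t11 z' z)
    (hform : TrimDGFormulas d1 d3 m1 m2 m3 q1 q2 μ11 μ12 γ11 γ12 t11 t12)
    (hminG1 : ∀ i g, m1 i g ∈ maximalIdeal R) (z z' : F1' × (∀ i, G1 i)) :
    (t11 z z').1 - μ11 (z.1, 0) (z'.1, 0) ∈ maximalIdeal R • (⊤ : Submodule R F2) := by
  let proj := LinearMap.inl R F1' (Fin t → R) ∘ₗ LinearMap.fst R F1' (∀ i, G1 i)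
  refine (t11.compr₂ (LinearMap.fst R F2 _) -
      (μ11 ∘ₗ proj).compl₂ proj).apply_apply_mem_of_span_eq_top
    Prod.span_inl_union_single_eq_top Prod.span_inl_union_single_eq_top ?_ z z'
  rintro _ (⟨f, rfl⟩ | ⟨_, ⟨i, rfl⟩, g, rfl⟩) _ (⟨f', rfl⟩ | ⟨_, ⟨j, rfl⟩, g', rfl⟩)
  · simp [proj, fst_t11_inl_inl hform]
  · simpa [proj, Prod.mk_zero_zero] using fst_t11_inl_single_mem hform hminG1 f j g'
  · simpa [proj, Prod.mk_zero_zero] using fst_t11_single_inl_mem hskew hform hminG1 i g f'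
  · simpa [proj, Prod.mk_zero_zero] using fst_t11_single_single_mem hskew hform hminG1 i j g g'

theorem fst_t12_sub_mem [IsLocalRing R]
    (hform : TrimDGFormulas d1 d3 m1 m2 m3 q1 q2 μ11 μ12 γ11 γ12 t11 t12)
    (hminG1 : ∀ i g, m1 i g ∈ maximalIdeal R) (z : F1' × (∀ i, G1 i)) (w : F2 × (∀ i, G2 i)) :
    (t12 z w).1 - μ12 (z.1, 0) w.1 ∈ maximalIdeal R • (⊤ : Submodule R F3) := by
  let proj := LinearMap.inl R F1' (Fin t → R) ∘ₗ LinearMap.fst R F1' (∀ i, G1 i)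
  refine (t12.compr₂ (LinearMap.fst R F3 _) -
      (μ12 ∘ₗ proj).compl₂ (LinearMap.fst R F2 _)).apply_apply_mem_of_span_eq_top
    Prod.span_inl_union_single_eq_top Prod.span_inl_union_single_eq_top ?_ z w
  rintro _ (⟨f, rfl⟩ | ⟨_, ⟨i, rfl⟩, g, rfl⟩) _ (⟨v, rfl⟩ | ⟨_, ⟨j, rfl⟩, c, rfl⟩)
  · simp [proj, fst_t12_inl_inl hform]
  · simp [proj, fst_t12_inl_single hform]
  · simpa [proj, Prod.mk_zero_zero] using fst_t12_single_inl_mem hform hminG1 i g v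
  · simp [proj, fst_t12_single_single hform]

end TrimmingProjection

theorem trimming_complex_projection_is_algebra_map_general
    {R : Type u} [CommRing R] [IsLocalRing R]
    (t : ℕ)
    (F1' F2 F3 : Type u)
    [AddCommGroup F1'] [Module R F1']
    [AddCommGroup F2] [Module R F2]
    [AddCommGroup F3] [Module R F3]
    (G1 G2 G3 : Fin t → Type u)
    [∀ i, AddCommGroup (G1 i)] [∀ i, Module R (G1 i)]
    [∀ i, AddCommGroup (G2 i)] [∀ i, Module R (G2 i)]
    [∀ i, AddCommGroup (G3 i)] [∀ i, Module R (G3 i)]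
    (d1 : (F1' × (Fin t → R)) →ₗ[R] R)
    (d2 : F2 →ₗ[R] (F1' × (Fin t → R)))
    (d3 : F3 →ₗ[R] F2)
    (m1 : ∀ i, G1 i →ₗ[R] R) (m2 : ∀ i, G2 i →ₗ[R] G1 i) (m3 : ∀ i, G3 i →ₗ[R] G2 i)
    -- the comparison maps of the trimming complex
    (q1 : ∀ i, F2 →ₗ[R] G1 i) (q2 : ∀ i, F3 →ₗ[R] G2 i)
    -- DG-algebra structure on `F`
    (μ11 : (F1' × (Fin t → R)) →ₗ[R] (F1' × (Fin t → R)) →ₗ[R] F2)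
    (μ12 : (F1' × (Fin t → R)) →ₗ[R] F2 →ₗ[R] F3)
    -- DG-algebra structures on the `G^i`
    (γ11 : ∀ i, G1 i →ₗ[R] G1 i →ₗ[R] G2 i)
    (γ12 : ∀ i, G1 i →ₗ[R] G2 i →ₗ[R] G3 i)
    -- minimality of `F` and the `G^i`
    (hminG1 : ∀ i g, m1 i g ∈ maximalIdeal R)
    -- `T` carries the DG-algebra structure of Theorem 3.2
    (t11 : (F1' × (∀ i, G1 i)) →ₗ[R] (F1' × (∀ i, G1 i)) →ₗ[R] (F2 × (∀ i, G2 i)))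
    (t12 : (F1' × (∀ i, G1 i)) →ₗ[R] (F2 × (∀ i, G2 i)) →ₗ[R] (F3 × (∀ i, G3 i)))
    (hax : TrimDGAxioms d1 d2 d3 m1 m2 m3 q1 q2 t11 t12)
    (hform : TrimDGFormulas d1 d3 m1 m2 m3 q1 q2 μ11 μ12 γ11 γ12 t11 t12) :
    -- conclusion: the projection `T̄ → F̄`, `f̄ ↦ f̄`, `ḡ ↦ 0`, is multiplicative
    -- modulo `𝔪`, i.e. a homomorphism of graded `k`-algebras
    (∀ z z' : F1' × (∀ i, G1 i),
      (t11 z z').1 - μ11 (z.1, 0) (z'.1, 0) ∈ maximalIdeal R • (⊤ : Submodule R F2)) ∧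
    (∀ (z : F1' × (∀ i, G1 i)) (w : F2 × (∀ i, G2 i)),
      (t12 z w).1 - μ12 (z.1, 0) w.1 ∈ maximalIdeal R • (⊤ : Submodule R F3)) :=
  ⟨fst_t11_sub_mem hax.2.2.1 hform hminG1, fst_t12_sub_mem hform hminG1⟩

theorem trimming_complex_projection_is_algebra_map
    {R : Type u} [CommRing R] [IsNoetherianRing R] [IsLocalRing R]
    -- regular local ring: the maximal ideal is generated by a regular sequence
    (hreg : ∃ xs : List R, RingTheory.Sequence.IsRegular R xs ∧
      Ideal.span {a | a ∈ xs} = maximalIdeal R)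
    (t : ℕ)
    (F1' F2 F3 : Type u)
    [AddCommGroup F1'] [Module R F1'] [Module.Free R F1'] [Module.Finite R F1']
    [AddCommGroup F2] [Module R F2] [Module.Free R F2] [Module.Finite R F2]
    [AddCommGroup F3] [Module R F3] [Module.Free R F3] [Module.Finite R F3]
    (G1 G2 G3 : Fin t → Type u)
    [∀ i, AddCommGroup (G1 i)] [∀ i, Module R (G1 i)]
    [∀ i, Module.Free R (G1 i)] [∀ i, Module.Finite R (G1 i)]
    [∀ i, AddCommGroup (G2 i)] [∀ i, Module R (G2 i)]
    [∀ i, Module.Free R (G2 i)] [∀ i, Module.Finite R (G2 i)]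
    [∀ i, AddCommGroup (G3 i)] [∀ i, Module R (G3 i)]
    [∀ i, Module.Free R (G3 i)] [∀ i, Module.Finite R (G3 i)]
    (I : Ideal R) (𝔞 : Fin t → Ideal R)
    (d1 : (F1' × (Fin t → R)) →ₗ[R] R)
    (d2 : F2 →ₗ[R] (F1' × (Fin t → R)))
    (d3 : F3 →ₗ[R] F2)
    -- `F` is a free resolution of `R/I`
    (hFres0 : LinearMap.range d1 = I)
    (hFres1 : LinearMap.ker d1 = LinearMap.range d2)
    (hFres2 : LinearMap.ker d2 = LinearMap.range d3)
    (hFres3 : LinearMap.ker d3 = ⊥)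
    -- `d₀ⁱ(F₂) ⊆ 𝔞 i e₀ⁱ`
    (ha : ∀ (i : Fin t) (v : F2), (d2 v).2 i ∈ 𝔞 i)
    (m1 : ∀ i, G1 i →ₗ[R] R) (m2 : ∀ i, G2 i →ₗ[R] G1 i) (m3 : ∀ i, G3 i →ₗ[R] G2 i)
    -- `G^i` is a free resolution of `R/𝔞 i`
    (hGres0 : ∀ i, LinearMap.range (m1 i) = 𝔞 i)
    (hGres1 : ∀ i, LinearMap.ker (m1 i) = LinearMap.range (m2 i))
    (hGres2 : ∀ i, LinearMap.ker (m2 i) = LinearMap.range (m3 i))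
    (hGres3 : ∀ i, LinearMap.ker (m3 i) = ⊥)
    -- the comparison maps of the trimming complex
    (q1 : ∀ i, F2 →ₗ[R] G1 i) (q2 : ∀ i, F3 →ₗ[R] G2 i)
    (hq1 : ∀ i v, m1 i (q1 i v) = (d2 v).2 i)
    (hq2 : ∀ i w, m2 i (q2 i w) = q1 i (d3 w))
    -- DG-algebra structure on `F`
    (μ11 : (F1' × (Fin t → R)) →ₗ[R] (F1' × (Fin t → R)) →ₗ[R] F2)
    (μ12 : (F1' × (Fin t → R)) →ₗ[R] F2 →ₗ[R] F3)
    (hFleib1 : ∀ a b, d2 (μ11 a b) = d1 a • b - d1 b • a)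
    (hFalt : ∀ a, μ11 a a = 0)
    (hFskew : ∀ a b, μ11 a b = - μ11 b a)
    (hFleib2 : ∀ a z, d3 (μ12 a z) = d1 a • z - μ11 a (d2 z))
    (hFassoc : ∀ a b c, μ12 c (μ11 a b) = μ12 a (μ11 b c))
    -- DG-algebra structures on the `G^i`
    (γ11 : ∀ i, G1 i →ₗ[R] G1 i →ₗ[R] G2 i)
    (γ12 : ∀ i, G1 i →ₗ[R] G2 i →ₗ[R] G3 i)
    (hGleib1 : ∀ i a b, m2 i (γ11 i a b) = m1 i a • b - m1 i b • a)
    (hGalt : ∀ i a, γ11 i a a = 0)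
    (hGskew : ∀ i a b, γ11 i a b = - γ11 i b a)
    (hGleib2 : ∀ i a c, m3 i (γ12 i a c) = m1 i a • c - γ11 i a (m2 i c))
    (hGassoc : ∀ i a b c, γ12 i c (γ11 i a b) = γ12 i a (γ11 i b c))
    -- minimality of `F` and the `G^i`
    (hminF1 : ∀ a, d1 a ∈ maximalIdeal R)
    (hminF2 : ∀ v, d2 v ∈ maximalIdeal R • (⊤ : Submodule R (F1' × (Fin t → R))))
    (hminF3 : ∀ w, d3 w ∈ maximalIdeal R • (⊤ : Submodule R F2))
    (hminG1 : ∀ i g, m1 i g ∈ maximalIdeal R)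
    (hminG2 : ∀ i c, m2 i c ∈ maximalIdeal R • (⊤ : Submodule R (G1 i)))
    (hminG3 : ∀ i u, m3 i u ∈ maximalIdeal R • (⊤ : Submodule R (G2 i)))
    -- `T` carries the DG-algebra structure of Theorem 3.2
    (t11 : (F1' × (∀ i, G1 i)) →ₗ[R] (F1' × (∀ i, G1 i)) →ₗ[R] (F2 × (∀ i, G2 i)))
    (t12 : (F1' × (∀ i, G1 i)) →ₗ[R] (F2 × (∀ i, G2 i)) →ₗ[R] (F3 × (∀ i, G3 i)))
    (hax : TrimDGAxioms d1 d2 d3 m1 m2 m3 q1 q2 t11 t12)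
    (hform : TrimDGFormulas d1 d3 m1 m2 m3 q1 q2 μ11 μ12 γ11 γ12 t11 t12) :
    -- conclusion: the projection `T̄ → F̄`, `f̄ ↦ f̄`, `ḡ ↦ 0`, is multiplicative
    -- modulo `𝔪`, i.e. a homomorphism of graded `k`-algebras
    (∀ z z' : F1' × (∀ i, G1 i),
      (t11 z z').1 - μ11 (z.1, 0) (z'.1, 0) ∈ maximalIdeal R • (⊤ : Submodule R F2)) ∧
    (∀ (z : F1' × (∀ i, G1 i)) (w : F2 × (∀ i, G2 i)),
      (t12 z w).1 - μ12 (z.1, 0) w.1 ∈ maximalIdeal R • (⊤ : Submodule R F3)) :=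
  trimming_complex_projection_is_algebra_map_general t F1' F2 F3 G1 G2 G3 d1 d2 d3 m1 m2 m3 q1 q2
    μ11 μ12 γ11 γ12 hminG1 t11 t12 hax hform
end
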